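/- arXiv:2510.16224 — 7 statements merged into one kernel-verified Lean document; each statement's English description precedes it below -/
import Mathlib

section
/- Let n ≥ 1 and let R_1, …, R_{n+1} be exchangeable real-valued random variables. Define the conformal p-value π = (1 + #{i ∈ {1,…,n} : R_i ≥ R_{n+1}})/(n+1). Then for every α ∈ (0,1), P(π ≤ α) ≤ α; equivalently, P(π > α) ≥ 1 − α. -/
/-!
Let `c j` be the number of other scores that are at least `R j`, so that `π ≤ α` exactly when
`c (n+1) < ⌊α (n+1)⌋`. For any `k`, at most `k` indices `j` satisfy `c j < k`: the one among them
with the smallest score has all the others above it. By exchangeability the `n+1` events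
`{c j < k}` have the same probability, so `(n+1) P(c (n+1) < k) ≤ k`.
-/

open MeasureTheory Filter Set

/-- A finite family of random elements is exchangeable if its joint distribution is
invariant under permutations of the indices. -/
def Exchangeable {Ω E : Type*} [MeasurableSpace Ω] [MeasurableSpace E]
    (μ : Measure Ω) {k : ℕ} (V : Fin k → Ω → E) : Prop :=
  ∀ σ : Equiv.Perm (Fin k),
    Measure.map (fun ω (i : Fin k) => V (σ i) ω) μ =
      Measure.map (fun ω (i : Fin k) => V i ω) μ

open Finset
open scoped ENNReal

section Combinatorics

variable {ι α : Type*} [Fintype ι] [DecidableEq ι] [LinearOrder α]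

def countGE (v : ι → α) (j : ι) : ℕ := #{i | i ≠ j ∧ v j ≤ v i}

lemma countGE_comp_perm (v : ι → α) (σ : Equiv.Perm ι) (j : ι) :
    countGE (v ∘ σ) j = countGE v (σ j) :=
  card_equiv σ (by simp)

lemma card_countGE_lt_le (v : ι → α) (k : ℕ) : #{j | countGE v j < k} ≤ k := by
  set S : Finset ι := {j | countGE v j < k}
  rcases S.eq_empty_or_nonempty with hS | hS
  · simp [hS]
  obtain ⟨j₀, hj₀, hmin⟩ := S.exists_min_image v hS
  have hsub : S.erase j₀ ⊆ ({i | i ≠ j₀ ∧ v j₀ ≤ v i} : Finset ι) := fun i hi => by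
    rw [mem_erase] at hi
    simpa using ⟨hi.1, hmin i hi.2⟩
  have hcard := Finset.card_le_card hsub
  rw [card_erase_of_mem hj₀] at hcard
  have hj₀k : countGE v j₀ < k := (mem_filter.1 hj₀).2
  unfold countGE at hj₀k
  omega

lemma natCard_castSucc_le_eq_countGE {n : ℕ} (v : Fin (n + 1) → α) :
    Nat.card {i : Fin n // v (Fin.last n) ≤ v i.castSucc} = countGE v (Fin.last n) := by
  rw [Nat.card_eq_fintype_card, Fintype.card_subtype, countGE, card_filter, card_filter,
    Fin.sum_univ_castSucc]
  simp [Fin.castSucc_ne_last]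

end Combinatorics

section Measurability

variable {ι α Ω : Type*} [Fintype ι] [DecidableEq ι] [LinearOrder α] [MeasurableSpace α]
  [TopologicalSpace α] [OrderClosedTopology α] [SecondCountableTopology α]
  [OpensMeasurableSpace α]

lemma measurable_countGE (j : ι) : Measurable fun v : ι → α => countGE v j := by
  simp only [countGE, card_filter]
  refine Finset.measurable_sum _ fun i _ => Measurable.ite ?_ measurable_const measurable_const
  exact (MeasurableSet.const _).inter
    (measurableSet_le (measurable_pi_apply j) (measurable_pi_apply i))

lemma measurableSet_countGE_lt [MeasurableSpace Ω] {V : ι → Ω → α}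
    (hV : ∀ i, Measurable (V i)) (j : ι) (k : ℕ) :
    MeasurableSet {ω | countGE (V · ω) j < k} :=
  measurableSet_lt ((measurable_countGE j).comp (measurable_pi_lambda _ hV)) measurable_const

end Measurability

open Classical in
lemma sum_measure_le_of_card_mem_le {ι Ω : Type*} [Fintype ι] [MeasurableSpace Ω]
    (μ : Measure Ω) {A : ι → Set Ω} (hA : ∀ i, MeasurableSet (A i)) {k : ℕ}
    (hk : ∀ ω, #{i | ω ∈ A i} ≤ k) :
    ∑ i, μ (A i) ≤ k * μ univ := by
  calc ∑ i, μ (A i) = ∫⁻ ω, ∑ i, (A i).indicator 1 ω ∂μ := by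
        rw [lintegral_finsetSum _ fun i _ => measurable_one.indicator (hA i)]
        simp only [lintegral_indicator_one (hA _)]
    _ ≤ ∫⁻ _, (k : ℝ≥0∞) ∂μ := lintegral_mono fun ω => by
        simpa [Set.indicator_apply, Finset.sum_boole] using hk ω
    _ = k * μ univ := lintegral_const _

section Exchangeable

variable {Ω α : Type*} [MeasurableSpace Ω] [MeasurableSpace α] {μ : Measure Ω} {N : ℕ}
  {V : Fin N → Ω → α}

lemma Exchangeable.measure_perm_mem (hV : Exchangeable μ V) (hmeas : ∀ i, Measurable (V i))
    (σ : Equiv.Perm (Fin N)) {S : Set (Fin N → α)} (hS : MeasurableSet S) :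
    μ {ω | (fun i => V (σ i) ω) ∈ S} = μ {ω | (fun i => V i ω) ∈ S} := by
  have h := congrArg (· S) (hV σ)
  rwa [Measure.map_apply (measurable_pi_lambda _ fun i => hmeas _) hS,
    Measure.map_apply (measurable_pi_lambda _ hmeas) hS] at h

variable [LinearOrder α] [TopologicalSpace α] [OrderClosedTopology α]
    [SecondCountableTopology α] [OpensMeasurableSpace α]

lemma Exchangeable.measure_countGE_lt_eq (hV : Exchangeable μ V)
    (hmeas : ∀ i, Measurable (V i)) (j j' : Fin N) (k : ℕ) :
    μ {ω | countGE (V · ω) j < k} = μ {ω | countGE (V · ω) j' < k} := by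
  have h := hV.measure_perm_mem hmeas (Equiv.swap j j')
    (measurableSet_lt (measurable_countGE j) measurable_const :
      MeasurableSet {v : Fin N → α | countGE v j < k})
  simp only [mem_ofPred_eq] at h
  rw [← h]
  congr! 4 with ω
  exact (countGE_comp_perm (V · ω) _ j).trans (by rw [Equiv.swap_apply_left])

lemma Exchangeable.natCast_mul_measure_countGE_lt_le [IsProbabilityMeasure μ]
    (hV : Exchangeable μ V) (hmeas : ∀ i, Measurable (V i)) (j : Fin N) (k : ℕ) :
    N * μ {ω | countGE (V · ω) j < k} ≤ k := by
  calc (N : ℝ≥0∞) * μ {ω | countGE (V · ω) j < k}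
      = ∑ i, μ {ω | countGE (V · ω) i < k} := by
        simp [hV.measure_countGE_lt_eq hmeas _ j]
    _ ≤ k * μ univ := sum_measure_le_of_card_mem_le μ (measurableSet_countGE_lt hmeas · k)
        fun ω => by simpa using card_countGE_lt_le (V · ω) k
    _ = k := by simp

end Exchangeable

theorem conformal_pvalue_superuniform_general
    {Ω : Type*} [MeasurableSpace Ω] (μ : Measure Ω) [IsProbabilityMeasure μ]
    (n : ℕ)
    (R : Fin (n + 1) → Ω → ℝ)
    (hRmeas : ∀ i, Measurable (R i))
    (hexch : Exchangeable μ R)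
    (π : Ω → ℝ)
    (hπ : ∀ ω, π ω =
      (1 + (Nat.card {i : Fin n // R (Fin.last n) ω ≤ R i.castSucc ω} : ℝ)) / (n + 1))
    (α : ℝ) (hα : α ∈ Set.Ioo (0 : ℝ) 1) :
    μ {ω | π ω ≤ α} ≤ ENNReal.ofReal α ∧
      ENNReal.ofReal (1 - α) ≤ μ {ω | α < π ω} := by
  set m := ⌊α * (n + 1)⌋₊
  have hevent : {ω | π ω ≤ α} = {ω | countGE (R · ω) (Fin.last n) < m} := by
    ext ω
    rw [mem_ofPred_eq, mem_ofPred_eq, hπ, natCard_castSucc_le_eq_countGE (R · ω),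
      div_le_iff₀ (by positivity), Nat.lt_iff_add_one_le, Nat.le_floor_iff' (by omega)]
    push_cast
    rw [add_comm]
  have hle : μ {ω | π ω ≤ α} ≤ ENNReal.ofReal α := by
    have hm : (m : ℝ≥0∞) ≤ (n + 1 : ℕ) * ENNReal.ofReal α := by
      have hαn : 0 ≤ α * (n + 1) := mul_nonneg hα.1.le (by positivity)
      rw [← ENNReal.ofReal_natCast, ← ENNReal.ofReal_natCast, ← ENNReal.ofReal_mul (by positivity)]
      exact ENNReal.ofReal_le_ofReal ((Nat.floor_le hαn).trans_eq (by push_cast; ring))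
    rw [hevent, ← ENNReal.mul_le_mul_iff_right (a := (n + 1 : ℕ)) (by simp) (by simp)]
    exact (hexch.natCast_mul_measure_countGE_lt_le hRmeas _ m).trans hm
  have hmeas : MeasurableSet {ω | π ω ≤ α} := hevent ▸ measurableSet_countGE_lt hRmeas _ m
  refine ⟨hle, ?_⟩
  have hcompl : {ω | α < π ω} = {ω | π ω ≤ α}ᶜ := by ext; simp
  rw [hcompl, prob_compl_eq_one_sub hmeas, ENNReal.ofReal_sub _ hα.1.le, ENNReal.ofReal_one]
  exact tsub_le_tsub_left hle 1

/-- For exchangeable scores `R_1, …, R_{n+1}`, the conformal p-value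
`π = (1 + #{i ≤ n : R_i ≥ R_{n+1}})/(n+1)` satisfies `P(π ≤ α) ≤ α`, equivalently
`P(π > α) ≥ 1 - α`, for every `α ∈ (0,1)`. -/
theorem conformal_pvalue_superuniform
    {Ω : Type*} [MeasurableSpace Ω] (μ : Measure Ω) [IsProbabilityMeasure μ]
    (n : ℕ) (hn : 1 ≤ n)
    (R : Fin (n + 1) → Ω → ℝ)
    (hRmeas : ∀ i, Measurable (R i))
    (hexch : Exchangeable μ R)
    (π : Ω → ℝ)
    (hπ : ∀ ω, π ω =
      (1 + (Nat.card {i : Fin n // R (Fin.last n) ω ≤ R i.castSucc ω} : ℝ)) / (n + 1))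
    (α : ℝ) (hα : α ∈ Set.Ioo (0 : ℝ) 1) :
    μ {ω | π ω ≤ α} ≤ ENNReal.ofReal α ∧
      ENNReal.ofReal (1 - α) ≤ μ {ω | α < π ω} :=
  conformal_pvalue_superuniform_general μ n R hRmeas hexch π hπ α hα
end

section
/- Let R_1, …, R_{n+1} be exchangeable real-valued random variables with P(R_i = R_j) = 0 for all i ≠ j. Then the rank K = #{i ∈ {1,…,n+1} : R_i ≤ R_{n+1}} is uniformly distributed on {1, …, n+1}, i.e., P(K = j) = 1/(n+1) for every j ∈ {1,…,n+1}. -/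
/-!
Without ties, the ranks of the coordinates are a permutation of `1, …, n+1`, so for each `j`
almost surely exactly one coordinate has rank `j`, and the `n+1` probabilities
`P(rank of R_i = j)` sum to `1`. Exchangeability under the transposition of `i` and `n+1`
makes all of them equal to `P(K = j)`.
-/

open MeasureTheory Filter Set

namespace Tuple

variable {ι α : Type*} [Fintype ι] [LinearOrder α]

open Finset in
def rank (x : ι → α) (i : ι) : ℕ := #{k | x k ≤ x i}

theorem rank_comp_perm (x : ι → α) (σ : Equiv.Perm ι) (i : ι) :
    rank (x ∘ σ) i = rank x (σ i) := by
  simp only [rank, Finset.card_filter]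
  exact Fintype.sum_equiv σ _ _ fun k => by simp

theorem one_le_rank (x : ι → α) (i : ι) : 1 ≤ rank x i :=
  Finset.card_pos.2 ⟨i, by simp⟩

theorem rank_le_card (x : ι → α) (i : ι) : rank x i ≤ Fintype.card ι :=
  Finset.card_filter_le _ _

theorem rank_lt_rank_of_lt {x : ι → α} {a b : ι} (hab : x a < x b) : rank x a < rank x b := by
  refine Finset.card_lt_card ⟨fun k hk => ?_, fun hsub => ?_⟩
  · simp only [Finset.mem_filter] at hk ⊢
    exact ⟨hk.1, hk.2.trans hab.le⟩
  · have hb := hsub (Finset.mem_filter.2 ⟨Finset.mem_univ b, le_rfl⟩)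
    exact (Finset.mem_filter.1 hb).2.not_gt hab

theorem rank_injective {x : ι → α} (hx : Function.Injective x) : Function.Injective (rank x) := by
  intro a b hab
  by_contra hne
  rcases (hx.ne hne).lt_or_gt with h | h
  · exact (rank_lt_rank_of_lt h).ne hab
  · exact (rank_lt_rank_of_lt h).ne' hab

theorem exists_rank_eq {x : ι → α} (hx : Function.Injective x) {j : ℕ} (hj₁ : 1 ≤ j)
    (hj₂ : j ≤ Fintype.card ι) : ∃ i, rank x i = j := by
  have himage : Finset.univ.image (rank x) = Finset.Icc 1 (Fintype.card ι) := by
    refine Finset.eq_of_subset_of_card_le (fun y hy => ?_) ?_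
    · obtain ⟨i, -, rfl⟩ := Finset.mem_image.1 hy
      exact Finset.mem_Icc.2 ⟨one_le_rank x i, rank_le_card x i⟩
    · rw [Nat.card_Icc, Finset.card_image_of_injective _ (rank_injective hx)]
      simp
  have hj : j ∈ Finset.univ.image (rank x) := himage ▸ Finset.mem_Icc.2 ⟨hj₁, hj₂⟩
  simpa using hj

end Tuple

theorem ae_injective_of_measure_eq_zero {Ω ι α : Type*} [MeasurableSpace Ω] [Countable ι]
    {μ : Measure Ω} {X : Ω → ι → α} (h : ∀ i j, i ≠ j → μ {ω | X ω i = X ω j} = 0) :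
    ∀ᵐ ω ∂μ, Function.Injective (X ω) := by
  have hne : ∀ i j, ∀ᵐ ω ∂μ, i ≠ j → X ω i ≠ X ω j := fun i j => by
    by_cases hij : i = j
    · exact ae_of_all _ fun _ h => absurd hij h
    · exact (measure_eq_zero_iff_ae_notMem.1 (h i j hij)).mono fun _ hω _ => hω
  filter_upwards [ae_all_iff.2 fun i => ae_all_iff.2 (hne i)] with ω hω a b hab
  by_contra hne
  exact hω a b hne hab

open Tuple

section Measure

variable {Ω ι α : Type*} [Fintype ι] [LinearOrder α] [TopologicalSpace α] [OrderClosedTopology α]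
  [MeasurableSpace α] [OpensMeasurableSpace α] [SecondCountableTopology α]
  [MeasurableSpace Ω] {μ : Measure Ω} {X : Ω → ι → α}

theorem measurable_rank (i : ι) : Measurable fun x : ι → α => rank x i := by
  simp only [rank, Finset.card_filter]
  exact Finset.measurable_sum _ fun k _ =>
    Measurable.ite (measurableSet_le (measurable_pi_apply k) (measurable_pi_apply i))
      measurable_const measurable_const

theorem measure_rank_eq_of_map_comp_perm (hX : Measurable X)
    (hperm : ∀ σ : Equiv.Perm ι, μ.map (fun ω => X ω ∘ σ) = μ.map X) (j : ℕ) (i i' : ι) :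
    μ {ω | rank (X ω) i = j} = μ {ω | rank (X ω) i' = j} := by
  classical
  have hS : MeasurableSet {x : ι → α | rank x i = j} := measurable_rank i (measurableSet_singleton j)
  have hXσ : Measurable fun ω => X ω ∘ Equiv.swap i i' :=
    measurable_pi_lambda _ fun k => (measurable_pi_apply _).comp hX
  have := congrArg (· {x | rank x i = j}) (hperm (Equiv.swap i i'))
  simp only [Measure.map_apply hXσ hS, Measure.map_apply hX hS] at this
  simpa [rank_comp_perm] using this.symm

theorem sum_measure_rank_eq_one [IsProbabilityMeasure μ] (hX : Measurable X)
    (hinj : ∀ᵐ ω ∂μ, Function.Injective (X ω)) {j : ℕ} (hj₁ : 1 ≤ j)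
    (hj₂ : j ≤ Fintype.card ι) :
    ∑ i, μ {ω | rank (X ω) i = j} = 1 := by
  have hmeas : ∀ i, MeasurableSet {ω | rank (X ω) i = j} := fun i =>
    (measurable_rank i).comp hX (measurableSet_singleton j)
  have hdisj : Pairwise (Function.onFun (AEDisjoint μ) fun i => {ω | rank (X ω) i = j}) :=
    fun a b hab => measure_eq_zero_iff_ae_notMem.2 <| hinj.mono fun ω hω hω' =>
      hab (rank_injective hω (hω'.1.trans hω'.2.symm))
  have hcover : (⋃ i, {ω | rank (X ω) i = j}) =ᵐ[μ] univ :=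
    ae_eq_univ.2 <| measure_eq_zero_iff_ae_notMem.2 <| hinj.mono fun ω hω hω' =>
      hω' (mem_iUnion.2 (exists_rank_eq hω hj₁ hj₂))
  calc ∑ i, μ {ω | rank (X ω) i = j} = μ (⋃ i, {ω | rank (X ω) i = j}) := by
        rw [measure_iUnion₀ hdisj fun i => (hmeas i).nullMeasurableSet, tsum_fintype]
    _ = 1 := by rw [measure_congr hcover, measure_univ]

theorem measure_rank_eq_inv_card [IsProbabilityMeasure μ] (hX : Measurable X)
    (hperm : ∀ σ : Equiv.Perm ι, μ.map (fun ω => X ω ∘ σ) = μ.map X)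
    (hinj : ∀ᵐ ω ∂μ, Function.Injective (X ω)) {j : ℕ} (hj₁ : 1 ≤ j)
    (hj₂ : j ≤ Fintype.card ι) (i : ι) :
    μ {ω | rank (X ω) i = j} = (Fintype.card ι : ENNReal)⁻¹ := by
  have hsum := sum_measure_rank_eq_one hX hinj hj₁ hj₂
  simp only [measure_rank_eq_of_map_comp_perm hX hperm j _ i, Finset.sum_const,
    Finset.card_univ, nsmul_eq_mul] at hsum
  exact ENNReal.eq_inv_of_mul_eq_one_left (by rwa [mul_comm])

end Measure

/-- For exchangeable, almost-surely tie-free scores `R_1, …, R_{n+1}`,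
the rank `K = #{i : R_i ≤ R_{n+1}}` is uniform on `{1, …, n+1}`. -/
theorem conformal_rank_uniform
    {Ω : Type*} [MeasurableSpace Ω] (μ : Measure Ω) [IsProbabilityMeasure μ]
    (n : ℕ)
    (R : Fin (n + 1) → Ω → ℝ)
    (hRmeas : ∀ i, Measurable (R i))
    (hexch : Exchangeable μ R)
    (hties : ∀ i j : Fin (n + 1), i ≠ j → μ {ω | R i ω = R j ω} = 0)
    (K : Ω → ℕ)
    (hK : ∀ ω, K ω = Nat.card {i : Fin (n + 1) // R i ω ≤ R (Fin.last n) ω}) :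
    ∀ j : ℕ, 1 ≤ j → j ≤ n + 1 →
      μ {ω | K ω = j} = ((n : ENNReal) + 1)⁻¹ := by
  intro j hj₁ hj₂
  have hK_rank : ∀ ω, K ω = rank (fun i => R i ω) (Fin.last n) := fun ω => by
    rw [hK, Nat.card_eq_fintype_card, Fintype.card_subtype, rank]
  have hrank := measure_rank_eq_inv_card (measurable_pi_lambda _ hRmeas) hexch
    (ae_injective_of_measure_eq_zero hties) hj₁ (by simpa using hj₂) (Fin.last n)
  simpa [hK_rank] using hrank
end

section
/- Let α ∈ (0,1), let (x_1,y_1), …, (x_{n+1},y_{n+1}) be exchangeable random vectors in ℝ^p × ℝ, and partition {1,…,n} into nonempty sets I_1 and I_2. Let μ̂ : ℝ^p → ℝ be any measurable prediction rule constructed only from the data {(x_i, y_i) : i ∈ I_1}. Define R_i = |y_i − μ̂(x_i)| for i ∈ I_2, and for y ∈ ℝ let π(y) = (1 + #{i ∈ I_2 : R_i ≥ |y − μ̂(x_{n+1})|})/(|I_2| + 1) and C(x_{n+1}) = {y ∈ ℝ : π(y) > α}. Then P(y_{n+1} ∈ C(x_{n+1})) ≥ 1 − α. If, in addition, the absolute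 residuals |y_i − μ̂(x_i)| for i ∈ I_2 ∪ {n+1} have a continuous joint distribution, then P(y_{n+1} ∈ C(x_{n+1})) ≤ 1 − α + 1/(|I_2| + 1). -/
open MeasureTheory Filter Set

/-! Put the test index `n + 1` together with the calibration indices into `K`, and let
`r_j = #{j' ∈ K | s_j ≤ s_j'}` be the rank of the residual `s_j` counted from the top, so that
`π(y_{n+1}) = r_{n+1} / #K`. Swapping the test point with a calibration point leaves the training
sample, hence `μhat`, unchanged, so by exchangeability the residual vector has a swap-invariant
law and `r_{n+1}` is distributed like every `r_j`, `j ∈ K`. Thus `P(r_{n+1} ≤ k)` is the average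
`E #{j ∈ K | r_j ≤ k} / #K ≤ k / #K`, as at most `k` indices can have rank `≤ k`; with
`k = ⌊α #K⌋` this is the lower bound. Without ties the ranks are distinct, so at most `#K - k`
of them exceed `k`, which gives the upper bound. -/

open Finset

section Rank

variable {ι : Type*} (K : Finset ι) (s : ι → ℝ)

noncomputable def conformalRank (j : ι) : ℕ := #{j' ∈ K | s j ≤ s j'}

variable {K s}

lemma conformalRank_le_card (j : ι) : conformalRank K s j ≤ #K := card_filter_le _ _

lemma card_filter_conformalRank_le (k : ℕ) : #{j ∈ K | conformalRank K s j ≤ k} ≤ k := by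
  rcases Finset.eq_empty_or_nonempty {j ∈ K | conformalRank K s j ≤ k} with hF | hF
  · simp [hF]
  obtain ⟨j₀, hj₀, hmin⟩ := exists_min_image _ s hF
  calc #{j ∈ K | conformalRank K s j ≤ k}
      ≤ conformalRank K s j₀ :=
        card_le_card fun j hj => mem_filter.2 ⟨(mem_filter.1 hj).1, hmin j hj⟩
    _ ≤ k := (mem_filter.1 hj₀).2

lemma conformalRank_lt_conformalRank_of_lt {j j' : ι} (hj : j ∈ K) (h : s j < s j') :
    conformalRank K s j' < conformalRank K s j := by
  refine card_lt_card ((Finset.ssubset_iff_of_subset fun i hi => ?_).2 ⟨j, ?_, ?_⟩)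
  · rw [mem_filter] at hi ⊢
    exact ⟨hi.1, h.le.trans hi.2⟩
  · exact mem_filter.2 ⟨hj, le_rfl⟩
  · simpa using fun _ => h

lemma injOn_conformalRank (hs : Set.InjOn s K) : Set.InjOn (conformalRank K s) K := by
  intro j hj j' hj' h
  by_contra hne
  rcases (hs.ne hj hj' hne).lt_or_gt with hlt | hlt
  · exact (conformalRank_lt_conformalRank_of_lt hj hlt).ne' h
  · exact (conformalRank_lt_conformalRank_of_lt hj' hlt).ne h

lemma card_filter_lt_conformalRank_le (hs : Set.InjOn s K) (k : ℕ) :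
    #{j ∈ K | k < conformalRank K s j} ≤ #K - k :=
  calc #{j ∈ K | k < conformalRank K s j}
      = #(image (conformalRank K s) {j ∈ K | k < conformalRank K s j}) :=
        (card_image_of_injOn
          ((injOn_conformalRank hs).mono (coe_subset.2 (filter_subset _ _)))).symm
    _ ≤ #(Ioc k #K) := card_le_card <| image_subset_iff.2 fun j hj =>
        mem_Ioc.2 ⟨(mem_filter.1 hj).2, conformalRank_le_card j⟩
    _ = #K - k := Nat.card_Ioc _ _

lemma conformalRank_comp_perm {σ : Equiv.Perm ι} (hσ : ∀ i, σ i ∈ K ↔ i ∈ K) (j : ι) :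
    conformalRank K (s ∘ σ) j = conformalRank K s (σ j) :=
  card_bij' (fun i _ => σ i) (fun i _ => σ.symm i) (fun i hi => by simp_all)
    (fun i hi => by
      rw [mem_filter] at hi ⊢
      exact ⟨(hσ _).1 (by simpa using hi.1), by simpa using hi.2⟩) (by simp) (by simp)

lemma conformalRank_insert [DecidableEq ι] {j : ι} (hj : j ∉ K) :
    conformalRank (insert j K) s j = #{i ∈ K | s j ≤ s i} + 1 := by
  rw [conformalRank, filter_insert, if_pos le_rfl, card_insert_of_notMem (by simp [hj])]

lemma measurable_conformalRank (K : Finset ι) (j : ι) :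
    Measurable fun s : ι → ℝ => conformalRank K s j := by
  simp_rw [conformalRank, card_filter]
  exact Finset.measurable_sum _ fun j' _ => Measurable.ite
    (measurableSet_le (measurable_pi_apply j) (measurable_pi_apply j'))
    measurable_const measurable_const

end Rank

open scoped ENNReal

open Classical in
lemma sum_measure_le_of_ae_card_le {V ι : Type*} [MeasurableSpace V] (ν : Measure V)
    [IsProbabilityMeasure ν] (K : Finset ι) {A : ι → Set V}
    (hA : ∀ j ∈ K, MeasurableSet (A j)) (c : ℕ) (hc : ∀ᵐ v ∂ν, #{j ∈ K | v ∈ A j} ≤ c) :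
    ∑ j ∈ K, ν (A j) ≤ c :=
  calc ∑ j ∈ K, ν (A j) = ∫⁻ v, ∑ j ∈ K, (A j).indicator 1 v ∂ν := by
        rw [lintegral_finsetSum _ fun j hj => measurable_one.indicator (hA j hj)]
        exact sum_congr rfl fun j hj => (lintegral_indicator_one (hA j hj)).symm
    _ = ∫⁻ v, (#{j ∈ K | v ∈ A j} : ℝ≥0∞) ∂ν := by
        simp only [indicator_apply, Pi.one_apply, sum_boole]
    _ ≤ ∫⁻ _, (c : ℝ≥0∞) ∂ν := lintegral_mono_ae (hc.mono fun v hv => by exact_mod_cast hv)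
    _ = c := by simp

lemma ae_injOn_of_measure_eq_zero {ι β : Type*} [MeasurableSpace β] {ρ : Measure (ι → β)}
    {K : Finset ι} (h : ∀ j ∈ K, ∀ j' ∈ K, j ≠ j' → ρ {s | s j = s j'} = 0) :
    ∀ᵐ s ∂ρ, Set.InjOn s K := by
  have hpair : ∀ j ∈ K, ∀ j' ∈ K, ∀ᵐ s ∂ρ, j ≠ j' → s j ≠ s j' := by
    intro j hj j' hj'
    by_cases hjj' : j = j'
    · simp [hjj']
    · filter_upwards [measure_eq_zero_iff_ae_notMem.1 (h j hj j' hj' hjj')] with s hs _ using hs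
  filter_upwards [(eventually_all_finset K).2 fun j hj => (eventually_all_finset K).2 (hpair j hj)]
    with s hs j hj j' hj' heq
  by_contra hne
  exact hs j hj j' hj' hne heq

lemma swap_apply_mem_iff {ι : Type*} [DecidableEq ι] {K : Finset ι} {a b : ι} (ha : a ∈ K)
    (hb : b ∈ K) (i : ι) : Equiv.swap a b i ∈ K ↔ i ∈ K := by
  rw [Equiv.swap_apply_def]
  split_ifs <;> simp_all

section Exchangeable

variable {ι : Type*} [DecidableEq ι] {ρ : Measure (ι → ℝ)} {K : Finset ι} {j₀ : ι}

lemma measure_setOf_conformalRank_eq {j : ι} (hρ : ρ.map (· ∘ Equiv.swap j₀ j) = ρ)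
    (hj₀ : j₀ ∈ K) (hj : j ∈ K) (P : ℕ → Prop) :
    ρ {s | P (conformalRank K s j)} = ρ {s | P (conformalRank K s j₀)} := by
  have hswap : {s | P (conformalRank K s j)} =
      (· ∘ Equiv.swap j₀ j) ⁻¹' {s | P (conformalRank K s j₀)} := by
    ext s
    simp [conformalRank_comp_perm (swap_apply_mem_iff hj₀ hj)]
  have hmeas : MeasurableSet {s : ι → ℝ | P (conformalRank K s j₀)} :=
    measurable_conformalRank K j₀ (.of_discrete)
  rw [hswap, ← Measure.map_apply (by fun_prop) hmeas, hρ]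

variable [IsProbabilityMeasure ρ]

open Classical in
lemma card_mul_measureReal_conformalRank_le
    (hρ : ∀ j ∈ K, ρ.map (· ∘ Equiv.swap j₀ j) = ρ) (hj₀ : j₀ ∈ K) (P : ℕ → Prop) (c : ℕ)
    (hc : ∀ᵐ s ∂ρ, #{j ∈ K | P (conformalRank K s j)} ≤ c) :
    (#K : ℝ) * ρ.real {s | P (conformalRank K s j₀)} ≤ c := by
  have hsum : ∑ j ∈ K, ρ {s | P (conformalRank K s j)} ≤ c :=
    sum_measure_le_of_ae_card_le ρ K (fun j _ => measurable_conformalRank K j .of_discrete) c hc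
  rw [sum_congr rfl fun j hj => measure_setOf_conformalRank_eq (hρ j hj) hj₀ hj P,
    sum_const, nsmul_eq_mul] at hsum
  simpa [measureReal_def] using ENNReal.toReal_mono (by simp) hsum

theorem ofReal_one_sub_le_measure_lt_conformalRank
    (hρ : ∀ j ∈ K, ρ.map (· ∘ Equiv.swap j₀ j) = ρ) (hj₀ : j₀ ∈ K) {α : ℝ} (hα : 0 ≤ α) :
    ENNReal.ofReal (1 - α) ≤ ρ {s | α * #K < conformalRank K s j₀} := by
  set k := ⌊α * #K⌋₊
  have hK : (0 : ℝ) < #K := by exact_mod_cast card_pos.2 ⟨j₀, hj₀⟩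
  have hset : {s | α * #K < conformalRank K s j₀} = {s | conformalRank K s j₀ ≤ k}ᶜ := by
    ext s
    simp [k, Nat.le_floor_iff (by positivity : 0 ≤ α * #K)]
  have hcount := card_mul_measureReal_conformalRank_le hρ hj₀ (· ≤ k) k
    (ae_of_all _ fun s => by convert card_filter_conformalRank_le (s := s) k)
  have hk : (k : ℝ) ≤ α * #K := Nat.floor_le (by positivity)
  have hmeas : MeasurableSet {s : ι → ℝ | conformalRank K s j₀ ≤ k} :=
    measurable_conformalRank K j₀ (.of_discrete : MeasurableSet {r : ℕ | r ≤ k})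
  rw [ENNReal.ofReal_le_iff_le_toReal (measure_ne_top _ _), ← measureReal_def, hset,
    probReal_compl_eq_one_sub hmeas]
  have : ρ.real {s | conformalRank K s j₀ ≤ k} ≤ α :=
    le_of_mul_le_mul_left (by linarith) hK
  linarith

theorem measure_lt_conformalRank_le_ofReal
    (hρ : ∀ j ∈ K, ρ.map (· ∘ Equiv.swap j₀ j) = ρ) (hj₀ : j₀ ∈ K) {α : ℝ} (hα₀ : 0 ≤ α)
    (hα₁ : α < 1) (hties : ∀ᵐ s ∂ρ, Set.InjOn s K) :
    ρ {s | α * #K < conformalRank K s j₀} ≤ ENNReal.ofReal (1 - α + 1 / #K) := by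
  set k := ⌊α * #K⌋₊
  have hK : (0 : ℝ) < #K := by exact_mod_cast card_pos.2 ⟨j₀, hj₀⟩
  have hset : {s | α * #K < conformalRank K s j₀} = {s | k < conformalRank K s j₀} := by
    ext s
    simp [k, Nat.floor_lt (by positivity : 0 ≤ α * #K)]
  have hcount := card_mul_measureReal_conformalRank_le hρ hj₀ (k < ·) (#K - k)
    (hties.mono fun s hs => by convert card_filter_lt_conformalRank_le hs k)
  have hkK : k ≤ #K := Nat.floor_le_of_le (by nlinarith)
  have hk : α * #K < k + 1 := Nat.lt_floor_add_one _
  rw [Nat.cast_sub hkK] at hcount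
  have hexpand : (#K : ℝ) * (1 - α + 1 / #K) = #K - α * #K + 1 := by
    field_simp
  rw [hset, ENNReal.le_ofReal_iff_toReal_le (measure_ne_top _ _)
    (by linarith [one_div_pos.2 hK]), ← measureReal_def]
  exact le_of_mul_le_mul_left (by linarith) hK

theorem conformal_coverage_bounds {Ω : Type*} [MeasurableSpace Ω] {μ : Measure Ω}
    [IsProbabilityMeasure μ] {Z : Ω → ι → ℝ} (hZ : Measurable Z)
    (hρ : ∀ j ∈ K, (μ.map Z).map (· ∘ Equiv.swap j₀ j) = μ.map Z) (hj₀ : j₀ ∈ K) {α : ℝ}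
    (hα₀ : 0 ≤ α) (hα₁ : α < 1) :
    ENNReal.ofReal (1 - α) ≤ μ {ω | α * #K < conformalRank K (Z ω) j₀} ∧
      ((∀ᵐ s ∂μ.map Z, Set.InjOn s K) →
        μ {ω | α * #K < conformalRank K (Z ω) j₀} ≤ ENNReal.ofReal (1 - α + 1 / #K)) := by
  have := Measure.isProbabilityMeasure_map (μ := μ) hZ.aemeasurable
  have hmeas : MeasurableSet {s : ι → ℝ | α * #K < conformalRank K s j₀} :=
    measurable_conformalRank K j₀ (.of_discrete : MeasurableSet {r : ℕ | α * #K < r})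
  rw [show μ {ω | α * #K < conformalRank K (Z ω) j₀} = μ.map Z {s | α * #K < conformalRank K s j₀}
    from (Measure.map_apply hZ hmeas).symm]
  exact ⟨ofReal_one_sub_le_measure_lt_conformalRank hρ hj₀ hα₀,
    measure_lt_conformalRank_le_ofReal hρ hj₀ hα₀ hα₁⟩

end Exchangeable

lemma Exchangeable.map_comp_perm {Ω E β : Type*} [MeasurableSpace Ω] [MeasurableSpace E]
    [MeasurableSpace β] {μ : Measure Ω} {k : ℕ} {V : Fin k → Ω → E}
    (hV : ∀ i, Measurable (V i)) (hexch : Exchangeable μ V) {F : (Fin k → E) → Fin k → β}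
    (hF : Measurable F) {σ : Equiv.Perm (Fin k)} (hFσ : ∀ v, F (v ∘ σ) = F v ∘ σ) :
    (μ.map fun ω => F fun i => V i ω).map (· ∘ σ) = μ.map fun ω => F fun i => V i ω := by
  have hdata : Measurable fun ω i => V i ω := measurable_pi_lambda _ hV
  have hdataσ : Measurable fun ω i => V (σ i) ω := measurable_pi_lambda _ fun i => hV (σ i)
  have hequiv : ((· ∘ σ) ∘ fun ω => F fun i => V i ω) = F ∘ fun ω i => V (σ i) ω :=
    funext fun ω => (hFσ _).symm
  have hscore : Measurable fun ω => F fun i => V i ω := hF.comp hdata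
  rw [Measure.map_map (by fun_prop) hscore, hequiv, ← Measure.map_map hF hdataσ,
    hexch σ, Measure.map_map hF hdata]
  rfl

lemma Finset.natCard_subtype_eq_card_filter {γ : Type*} (s : Finset γ) (P : γ → Prop)
    [DecidablePred P] : Nat.card {i : {i // i ∈ s} // P i.1} = #{i ∈ s | P i} := by
  rw [← Nat.card_eq_finsetCard]
  exact Nat.card_congr ((Equiv.subtypeSubtypeEquivSubtypeInter (· ∈ s) P).trans
    (Equiv.subtypeEquivRight fun _ => mem_filter.symm))

section SplitConformal

variable {n p : ℕ} {I₁ : Finset (Fin n)}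

def splitResiduals (μhat : ({i // i ∈ I₁} → (Fin p → ℝ) × ℝ) → (Fin p → ℝ) → ℝ)
    (v : Fin (n + 1) → (Fin p → ℝ) × ℝ) (j : Fin (n + 1)) : ℝ :=
  |(v j).2 - μhat (fun i => v i.1.castSucc) (v j).1|

variable {μhat : ({i // i ∈ I₁} → (Fin p → ℝ) × ℝ) → (Fin p → ℝ) → ℝ}

lemma measurable_splitResiduals (hμhat : Measurable (Function.uncurry μhat)) :
    Measurable (splitResiduals μhat) := by
  have htrain : Measurable fun (v : Fin (n + 1) → (Fin p → ℝ) × ℝ) (i : {i // i ∈ I₁}) =>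
      v i.1.castSucc := measurable_pi_lambda _ fun i => measurable_pi_apply _
  refine measurable_pi_lambda _ fun j => ?_
  have hfit : Measurable fun v : Fin (n + 1) → (Fin p → ℝ) × ℝ =>
      μhat (fun i => v i.1.castSucc) (v j).1 :=
    hμhat.comp (htrain.prodMk (measurable_pi_apply j).fst)
  exact ((measurable_pi_apply j).snd.sub hfit).abs

lemma splitResiduals_comp_perm {σ : Equiv.Perm (Fin (n + 1))}
    (hσ : ∀ i ∈ I₁, σ i.castSucc = i.castSucc) (v : Fin (n + 1) → (Fin p → ℝ) × ℝ) :
    splitResiduals μhat (v ∘ σ) = splitResiduals μhat v ∘ σ := by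
  funext j
  simp [splitResiduals, hσ]

variable {I₂ : Finset (Fin n)}

variable (I₂) in
def splitCalibration : Finset (Fin (n + 1)) := insert (Fin.last n) (I₂.map Fin.castSuccEmb)

lemma last_notMem_map_castSuccEmb : Fin.last n ∉ I₂.map Fin.castSuccEmb := by
  simp [Fin.castSucc_ne_last]

lemma last_mem_splitCalibration : Fin.last n ∈ splitCalibration I₂ := mem_insert_self _ _

lemma card_splitCalibration : #(splitCalibration I₂) = #I₂ + 1 := by
  rw [splitCalibration, card_insert_of_notMem last_notMem_map_castSuccEmb, card_map]

lemma swap_last_apply_castSucc (hdisj : Disjoint I₁ I₂) {j : Fin (n + 1)}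
    (hj : j ∈ splitCalibration I₂) {i : Fin n} (hi : i ∈ I₁) :
    Equiv.swap (Fin.last n) j i.castSucc = i.castSucc := by
  refine Equiv.swap_apply_of_ne_of_ne (Fin.castSucc_ne_last i) ?_
  rintro rfl
  exact Finset.disjoint_left.1 hdisj hi (by simpa [splitCalibration, Fin.castSucc_ne_last] using hj)

lemma conformalRank_splitCalibration_last (s : Fin (n + 1) → ℝ) :
    conformalRank (splitCalibration I₂) s (Fin.last n) =
      Nat.card {i : {i // i ∈ I₂} // s (Fin.last n) ≤ s i.1.castSucc} + 1 := by
  rw [splitCalibration, conformalRank_insert last_notMem_map_castSuccEmb, filter_map, card_map,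
    natCard_subtype_eq_card_filter I₂ fun i => s (Fin.last n) ≤ s i.castSucc]
  rfl

lemma ae_injOn_splitCalibration {Ω : Type*} [MeasurableSpace Ω] {μ : Measure Ω}
    {Z : Ω → Fin (n + 1) → ℝ} (hZ : Measurable Z)
    (h₁ : ∀ i j, i ∈ I₂ → j ∈ I₂ → i ≠ j → μ {ω | Z ω i.castSucc = Z ω j.castSucc} = 0)
    (h₂ : ∀ i ∈ I₂, μ {ω | Z ω i.castSucc = Z ω (Fin.last n)} = 0) :
    ∀ᵐ s ∂μ.map Z, Set.InjOn s (splitCalibration I₂) := by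
  have hmap : ∀ j j', μ.map Z {s | s j = s j'} = μ {ω | Z ω j = Z ω j'} := fun j j' =>
    Measure.map_apply hZ (measurableSet_eq_fun (measurable_pi_apply j) (measurable_pi_apply j'))
  refine ae_injOn_of_measure_eq_zero ?_
  simp only [splitCalibration, Finset.forall_mem_insert, Finset.forall_mem_map,
    Fin.castSuccEmb_apply, ne_eq, not_true_eq_false, IsEmpty.forall_iff, true_and,
    Fin.castSucc_inj, hmap]
  refine ⟨fun i hi _ => ?_, fun i hi => ⟨fun _ => h₂ i hi, fun j hj => h₁ i j hi hj⟩⟩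
  simpa only [eq_comm] using h₂ i hi

end SplitConformal

theorem split_conformal_validity_general
    {Ω : Type*} [MeasurableSpace Ω] (μ : Measure Ω) [IsProbabilityMeasure μ]
    (n p : ℕ)
    (D : Fin (n + 1) → Ω → (Fin p → ℝ) × ℝ)
    (hDmeas : ∀ i, Measurable (D i))
    (hexch : Exchangeable μ D)
    (I₁ I₂ : Finset (Fin n))
    (hdisj : Disjoint I₁ I₂)
    (μhat : ({i : Fin n // i ∈ I₁} → (Fin p → ℝ) × ℝ) → (Fin p → ℝ) → ℝ)
    (hμmeas : Measurable (Function.uncurry μhat))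
    (α : ℝ) (hα : α ∈ Set.Ioo (0 : ℝ) 1)
    (train : Ω → {i : Fin n // i ∈ I₁} → (Fin p → ℝ) × ℝ)
    (htrain : ∀ ω j, train ω j = D j.1.castSucc ω)
    (Rres : Fin n → Ω → ℝ)
    (hRres : ∀ i ω, Rres i ω =
      |(D i.castSucc ω).2 - μhat (train ω) ((D i.castSucc ω).1)|)
    (πv : ℝ → Ω → ℝ)
    (hπ : ∀ y ω, πv y ω =
      (1 + (Nat.card {i : {i : Fin n // i ∈ I₂} //
        |y - μhat (train ω) ((D (Fin.last n) ω).1)| ≤ Rres i.1 ω} : ℝ)) /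
        (I₂.card + 1)) :
    ENNReal.ofReal (1 - α) ≤ μ {ω | α < πv ((D (Fin.last n) ω).2) ω} ∧
      ((∀ i j : Fin n, i ∈ I₂ → j ∈ I₂ → i ≠ j →
          μ {ω | Rres i ω = Rres j ω} = 0) →
        (∀ i : Fin n, i ∈ I₂ →
          μ {ω | Rres i ω =
            |(D (Fin.last n) ω).2 - μhat (train ω) ((D (Fin.last n) ω).1)|} = 0) →
        μ {ω | α < πv ((D (Fin.last n) ω).2) ω} ≤
          ENNReal.ofReal (1 - α + 1 / (I₂.card + 1))) := by
  obtain ⟨hα₀, hα₁⟩ := hα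
  obtain rfl := funext₂ htrain
  obtain rfl := funext₂ hRres
  set score : Ω → Fin (n + 1) → ℝ := fun ω => splitResiduals μhat fun i => D i ω
  have hscore : Measurable score :=
    (measurable_splitResiduals hμmeas).comp (measurable_pi_lambda _ hDmeas)
  have hρ : ∀ j ∈ splitCalibration I₂,
      (μ.map score).map (· ∘ Equiv.swap (Fin.last n) j) = μ.map score := fun j hj =>
    hexch.map_comp_perm hDmeas (measurable_splitResiduals hμmeas)
      (splitResiduals_comp_perm fun i hi => swap_last_apply_castSucc hdisj hj hi)
  have hcover : ∀ ω, α < πv ((D (Fin.last n) ω).2) ω ↔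
      α * #(splitCalibration I₂) < conformalRank (splitCalibration I₂) (score ω) (Fin.last n) := by
    intro ω
    rw [hπ, conformalRank_splitCalibration_last, card_splitCalibration,
      lt_div_iff₀ (by positivity : (0 : ℝ) < #I₂ + 1)]
    push_cast
    rw [add_comm (1 : ℝ)]
    rfl
  obtain ⟨hlower, hupper⟩ :=
    conformal_coverage_bounds hscore hρ last_mem_splitCalibration hα₀.le hα₁
  simp only [hcover]
  refine ⟨hlower, fun h₁ h₂ => ?_⟩
  simpa [card_splitCalibration] using hupper (ae_injOn_splitCalibration hscore h₁ h₂)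

/-- validity of the split-sample conformal prediction interval.
The data `D i = (x_i, y_i)`, `i = 1, …, n+1`, are exchangeable; `{1,…,n}` is
partitioned into nonempty `I₁` (training) and `I₂` (calibration); `μhat` is any
measurable prediction rule built from the training data only.  With conformity
scores `R_i = |y_i - μhat(x_i)|` for `i ∈ I₂` and p-value
`π(y) = (1 + #{i ∈ I₂ : R_i ≥ |y - μhat(x_{n+1})|})/(|I₂|+1)`, the set
`C(x_{n+1}) = {y : π(y) > α}` covers `y_{n+1}` with probability at least `1-α`,
and at most `1 - α + 1/(|I₂|+1)` when the absolute residuals for `i ∈ I₂ ∪ {n+1}`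
have a continuous (tie-free) joint distribution. -/
theorem split_conformal_validity
    {Ω : Type*} [MeasurableSpace Ω] (μ : Measure Ω) [IsProbabilityMeasure μ]
    (n p : ℕ)
    (D : Fin (n + 1) → Ω → (Fin p → ℝ) × ℝ)
    (hDmeas : ∀ i, Measurable (D i))
    (hexch : Exchangeable μ D)
    (I₁ I₂ : Finset (Fin n)) (hI₁ : I₁.Nonempty) (hI₂ : I₂.Nonempty)
    (hdisj : Disjoint I₁ I₂) (hunion : I₁ ∪ I₂ = Finset.univ)
    (μhat : ({i : Fin n // i ∈ I₁} → (Fin p → ℝ) × ℝ) → (Fin p → ℝ) → ℝ)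
    (hμmeas : Measurable (Function.uncurry μhat))
    (α : ℝ) (hα : α ∈ Set.Ioo (0 : ℝ) 1)
    (train : Ω → {i : Fin n // i ∈ I₁} → (Fin p → ℝ) × ℝ)
    (htrain : ∀ ω j, train ω j = D j.1.castSucc ω)
    (Rres : Fin n → Ω → ℝ)
    (hRres : ∀ i ω, Rres i ω =
      |(D i.castSucc ω).2 - μhat (train ω) ((D i.castSucc ω).1)|)
    (πv : ℝ → Ω → ℝ)
    (hπ : ∀ y ω, πv y ω =
      (1 + (Nat.card {i : {i : Fin n // i ∈ I₂} //
        |y - μhat (train ω) ((D (Fin.last n) ω).1)| ≤ Rres i.1 ω} : ℝ)) /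
        (I₂.card + 1)) :
    ENNReal.ofReal (1 - α) ≤ μ {ω | α < πv ((D (Fin.last n) ω).2) ω} ∧
      ((∀ i j : Fin n, i ∈ I₂ → j ∈ I₂ → i ≠ j →
          μ {ω | Rres i ω = Rres j ω} = 0) →
        (∀ i : Fin n, i ∈ I₂ →
          μ {ω | Rres i ω =
            |(D (Fin.last n) ω).2 - μhat (train ω) ((D (Fin.last n) ω).1)|} = 0) →
        μ {ω | α < πv ((D (Fin.last n) ω).2) ω} ≤
          ENNReal.ofReal (1 - α + 1 / (I₂.card + 1))) :=
  split_conformal_validity_general μ n p D hDmeas hexch I₁ I₂ hdisj μhat hμmeas α hα train htrain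
    Rres hRres πv hπ
end

section
/- Let α ∈ (0,1), let (x_1,y_1), …, (x_{n+1},y_{n+1}) be exchangeable random vectors in ℝ^p × ℝ, and partition {1,…,n} into nonempty sets I_1 and I_2. Let μ̂ : ℝ^p → ℝ and σ̂ : ℝ^p → (0,∞) be measurable prediction and standardization rules constructed only from the data {(x_i, y_i) : i ∈ I_1}. Define the standardized conformity scores R_i = |y_i − μ̂(x_i)| / σ̂(x_i) for i ∈ I_2, and for y ∈ ℝ let π(y) = (1 + #{i ∈ I_2 : R_i ≥ |y − μ̂(x_{n+1})| / σ̂(x_{n+1})})/(|I_2| + 1) and C(x_{n+1}) = {y ∈ ℝ : π(y) > α}. Then P(y_{n+1} ∈ C(x_{n+1})) ≥ 1 − α. If, in addition, the standardized absolute residuals |y_i − μ̂(x_i)|/σ̂(x_i) for i ∈ I_2 ∪ {n+1} have a continuous joint distribution, then P(y_{n+1} ∈ C(x_{n+1})) ≤ 1 − α + 1/(|I_2| + 1). -/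
open MeasureTheory Filter Set
open scoped ENNReal


/-- number of indices `i ≠ j` with `v j ≤ v i` -/
noncomputable def cntAux {K : ℕ} (v : Fin K → ℝ) (j : Fin K) : ℕ :=
  ((Finset.univ.erase j).filter fun i => v j ≤ v i).card

lemma cntAux_lt (K : ℕ) (v : Fin (K+1) → ℝ) (j : Fin (K+1)) : cntAux v j < K + 1 := by
  have h1 : cntAux v j ≤ (Finset.univ.erase j).card :=
    Finset.card_filter_le _ _
  have h2 : (Finset.univ.erase j).card = K := by
    rw [Finset.card_erase_of_mem (Finset.mem_univ j)]
    simp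
  omega

lemma card_low_le {K t : ℕ} (v : Fin K → ℝ) :
    (Finset.univ.filter fun j => cntAux v j < t).card ≤ t := by
  by_contra h
  push_neg at h
  set A := Finset.univ.filter fun j => cntAux v j < t with hA
  have hne : A.Nonempty := Finset.card_pos.mp (lt_of_le_of_lt (Nat.zero_le t) h)
  obtain ⟨j, hjA, hjmin⟩ := A.exists_min_image v hne
  have hsub : A.erase j ⊆ (Finset.univ.erase j).filter fun i => v j ≤ v i := by
    intro i hi
    rw [Finset.mem_erase] at hi
    refine Finset.mem_filter.mpr ⟨Finset.mem_erase.mpr ⟨hi.1, Finset.mem_univ i⟩, hjmin i hi.2⟩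
  have hcard : A.card - 1 ≤ cntAux v j := by
    calc A.card - 1 = (A.erase j).card := (Finset.card_erase_of_mem hjA).symm
    _ ≤ _ := Finset.card_le_card hsub
  have hjlt : cntAux v j < t := (Finset.mem_filter.mp hjA).2
  omega

lemma cntAux_injective {K : ℕ} {v : Fin K → ℝ} (hv : Function.Injective v) :
    Function.Injective (cntAux v) := by
  have key : ∀ j k : Fin K, v j < v k → cntAux v k < cntAux v j := by
    intro j k hlt
    apply Finset.card_lt_card
    constructor
    · intro i hi
      rw [Finset.mem_filter, Finset.mem_erase] at hi ⊢
      refine ⟨⟨?_, Finset.mem_univ i⟩, le_trans hlt.le hi.2⟩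
      rintro rfl
      exact absurd hi.2 (not_le.mpr hlt)
    · intro hsub
      have hk : k ∈ (Finset.univ.erase j).filter fun i => v j ≤ v i := by
        rw [Finset.mem_filter, Finset.mem_erase]
        exact ⟨⟨fun h => absurd (h ▸ hlt) (lt_irrefl _), Finset.mem_univ k⟩, hlt.le⟩
      have := hsub hk
      rw [Finset.mem_filter, Finset.mem_erase] at this
      exact this.1.1 rfl
  intro j k hjk
  by_contra hne
  rcases lt_or_gt_of_ne (fun h : v j = v k => hne (hv h)) with h | h
  · exact absurd hjk.symm (Nat.ne_of_lt (key j k h))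
  · exact absurd hjk (Nat.ne_of_lt (key k j h))

lemma card_filter_fin_lt (K t : ℕ) (ht : t ≤ K) :
    (Finset.univ.filter fun i : Fin K => (i : ℕ) < t).card = t := by
  have himg : (Finset.univ.filter fun i : Fin K => (i : ℕ) < t).image Fin.val
      = Finset.range t := by
    ext a
    simp only [Finset.mem_image, Finset.mem_filter, Finset.mem_univ, true_and, Finset.mem_range]
    constructor
    · rintro ⟨i, hi, rfl⟩; exact hi
    · intro ha; exact ⟨⟨a, lt_of_lt_of_le ha ht⟩, ha, rfl⟩
  have := Finset.card_image_of_injective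
    (Finset.univ.filter fun i : Fin K => (i : ℕ) < t) (Fin.val_injective)
  rw [himg, Finset.card_range] at this
  exact this.symm

lemma card_low_eq {K t : ℕ} (v : Fin (K+1) → ℝ) (hv : Function.Injective v)
    (ht : t ≤ K + 1) :
    (Finset.univ.filter fun j => cntAux v j < t).card = t := by
  set g : Fin (K+1) → Fin (K+1) := fun j => ⟨cntAux v j, cntAux_lt K v j⟩ with hg
  have hginj : Function.Injective g := fun a b hab => by
    apply cntAux_injective hv
    simpa [hg, Fin.ext_iff] using hab
  have hgbij : Function.Bijective g := (Finite.injective_iff_bijective).mp hginj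
  have hkey : (Finset.univ.filter fun j => cntAux v j < t).card
      = (Finset.univ.filter fun i : Fin (K+1) => (i : ℕ) < t).card := by
    apply Finset.card_nbij g
    · intro a ha
      simp only [Finset.mem_coe, Finset.mem_filter, Finset.mem_univ, true_and] at ha ⊢
      exact ha
    · exact fun a _ b _ h => hginj h
    · intro b hb
      obtain ⟨a, rfl⟩ := hgbij.2 b
      simp only [Finset.mem_coe, Finset.mem_filter, Finset.mem_univ, true_and] at hb ⊢
      exact ⟨a, Finset.mem_coe.mpr (Finset.mem_filter.mpr ⟨Finset.mem_univ a, hb⟩), rfl⟩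
  rw [hkey, card_filter_fin_lt (K+1) t ht]

lemma cntAux_comp_perm {K : ℕ} (v : Fin K → ℝ) (c : Equiv.Perm (Fin K)) (k : Fin K) :
    cntAux (v ∘ c) k = cntAux v (c k) := by
  unfold cntAux
  apply Finset.card_bij (fun i _ => c i)
  · intro i hi
    rw [Finset.mem_filter, Finset.mem_erase] at hi ⊢
    exact ⟨⟨fun h => hi.1.1 (c.injective h), Finset.mem_univ _⟩, hi.2⟩
  · intro a _ b _ h; exact c.injective h
  · intro b hb
    rw [Finset.mem_filter, Finset.mem_erase] at hb
    refine ⟨c.symm b, ?_, by simp⟩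
    rw [Finset.mem_filter, Finset.mem_erase]
    refine ⟨⟨fun h => hb.1.1 ?_, Finset.mem_univ _⟩, by simpa using hb.2⟩
    rw [← h]; simp

lemma exch_rank {Ω : Type*} [MeasurableSpace Ω] (μ : Measure Ω) [IsProbabilityMeasure μ]
    (m t : ℕ) (V : Fin (m+1) → Ω → ℝ) (hV : ∀ i, Measurable (V i))
    (hexch : Exchangeable μ V) :
    MeasurableSet {ω | cntAux (fun i => V i ω) (Fin.last m) < t} ∧
    ((m+1 : ℝ≥0∞) * μ {ω | cntAux (fun i => V i ω) (Fin.last m) < t} ≤ t) ∧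
    ((∀ᵐ ω ∂μ, Function.Injective fun i => V i ω) → t ≤ m + 1 →
      (m+1 : ℝ≥0∞) * μ {ω | cntAux (fun i => V i ω) (Fin.last m) < t} = t) := by
  have hV' : Measurable (fun ω (i : Fin (m+1)) => V i ω) := measurable_pi_lambda _ hV
  have hcntm : ∀ j : Fin (m+1), Measurable fun v : Fin (m+1) → ℝ => cntAux v j := by
    intro j
    have h : (fun v : Fin (m+1) → ℝ => cntAux v j)
        = fun v => ∑ i ∈ Finset.univ.erase j, if v j ≤ v i then 1 else 0 := by
      funext v; exact Finset.card_filter _ _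
    rw [h]
    exact Finset.measurable_sum _ fun i _ =>
      Measurable.ite (measurableSet_le (measurable_pi_apply j) (measurable_pi_apply i))
        measurable_const measurable_const
  have hBmeas : ∀ j : Fin (m+1), MeasurableSet {v : Fin (m+1) → ℝ | cntAux v j < t} := by
    intro j
    exact (hcntm j) (MeasurableSpace.measurableSet_top : MeasurableSet (Set.Iio t))
  set W := fun ω (i : Fin (m+1)) => V i ω with hW
  have hEmeas : ∀ j, MeasurableSet {ω | cntAux (W ω) j < t} := fun j => hV' (hBmeas j)
  have hEeq : ∀ j : Fin (m+1),
      μ {ω | cntAux (W ω) j < t} = μ {ω | cntAux (W ω) (Fin.last m) < t} := by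
    intro j
    set c := Equiv.swap (Fin.last m) j with hc
    have h1 : {ω | cntAux (W ω) j < t}
        = (fun ω (i : Fin (m+1)) => V (c i) ω) ⁻¹' {v | cntAux v (Fin.last m) < t} := by
      ext ω
      simp only [Set.mem_setOf_eq, Set.mem_preimage]
      have h2 : (fun i => V (c i) ω) = (W ω) ∘ c := rfl
      rw [h2, cntAux_comp_perm]
      rw [hc]
      rw [Equiv.swap_apply_left]
    have hVc : Measurable (fun ω (i : Fin (m+1)) => V (c i) ω) :=
      measurable_pi_lambda _ fun i => hV (c i)
    rw [h1, ← Measure.map_apply hVc (hBmeas _), hexch c,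
      Measure.map_apply hV' (hBmeas _)]
    rfl
  have hsum : ∑ j : Fin (m+1), μ {ω | cntAux (W ω) j < t}
      = ∫⁻ ω, ((Finset.univ.filter fun j => cntAux (W ω) j < t).card : ℝ≥0∞) ∂μ := by
    calc ∑ j : Fin (m+1), μ {ω | cntAux (W ω) j < t}
        = ∑ j : Fin (m+1), ∫⁻ ω, {ω' | cntAux (W ω') j < t}.indicator 1 ω ∂μ :=
          Finset.sum_congr rfl fun j _ => (lintegral_indicator_one (hEmeas j)).symm
      _ = ∫⁻ ω, ∑ j : Fin (m+1), {ω' | cntAux (W ω') j < t}.indicator 1 ω ∂μ := by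
          rw [lintegral_finset_sum]
          exact fun j _ => (measurable_const.indicator (hEmeas j))
      _ = _ := by
          apply lintegral_congr; intro ω
          simp only [Set.indicator_apply, Set.mem_setOf_eq, Finset.card_filter, Pi.one_apply]
          push_cast
          rfl
  have hsum2 : ∑ j : Fin (m+1), μ {ω | cntAux (W ω) j < t}
      = (m+1 : ℝ≥0∞) * μ {ω | cntAux (W ω) (Fin.last m) < t} := by
    rw [Finset.sum_congr rfl fun j _ => hEeq j, Finset.sum_const, Finset.card_univ,
      Fintype.card_fin, nsmul_eq_mul]
    norm_num
  refine ⟨hEmeas _, ?_, ?_⟩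
  · rw [← hsum2, hsum]
    calc _ ≤ ∫⁻ _, (t : ℝ≥0∞) ∂μ :=
          lintegral_mono fun ω => Nat.cast_le.mpr (card_low_le (W ω))
      _ = t := by simp
  · intro hinj ht
    rw [← hsum2, hsum]
    have : ∫⁻ ω, ((Finset.univ.filter fun j => cntAux (W ω) j < t).card : ℝ≥0∞) ∂μ
        = ∫⁻ _, (t : ℝ≥0∞) ∂μ := by
      apply lintegral_congr_ae
      filter_upwards [hinj] with ω hω
      rw [card_low_eq (W ω) hω ht]
    rw [this]; simp

set_option maxHeartbeats 1000000 in
/-- validity of the locally adaptive split-sample conformal prediction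
interval.  The data `D i = (x_i, y_i)` are exchangeable; `{1,…,n}` is partitioned into
nonempty `I₁` (training) and `I₂` (calibration); `μhat` and `σhat` are measurable
prediction and (positive) standardization rules built from the training data only.
With standardized scores `R_i = |y_i - μhat(x_i)|/σhat(x_i)` for `i ∈ I₂` and p-value
`π(y) = (1 + #{i ∈ I₂ : R_i ≥ |y - μhat(x_{n+1})|/σhat(x_{n+1})})/(|I₂|+1)`, the set
`C(x_{n+1}) = {y : π(y) > α}` covers `y_{n+1}` with probability at least `1-α`, and at
most `1 - α + 1/(|I₂|+1)` when the standardized absolute residuals for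
`i ∈ I₂ ∪ {n+1}` have a continuous (tie-free) joint distribution. -/
theorem split_conformal_adaptive_validity
    {Ω : Type*} [MeasurableSpace Ω] (μ : Measure Ω) [IsProbabilityMeasure μ]
    (n p : ℕ)
    (D : Fin (n + 1) → Ω → (Fin p → ℝ) × ℝ)
    (hDmeas : ∀ i, Measurable (D i))
    (hexch : Exchangeable μ D)
    (I₁ I₂ : Finset (Fin n)) (hI₁ : I₁.Nonempty) (hI₂ : I₂.Nonempty)
    (hdisj : Disjoint I₁ I₂) (hunion : I₁ ∪ I₂ = Finset.univ)
    (μhat : ({i : Fin n // i ∈ I₁} → (Fin p → ℝ) × ℝ) → (Fin p → ℝ) → ℝ)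
    (hμmeas : Measurable (Function.uncurry μhat))
    (σhat : ({i : Fin n // i ∈ I₁} → (Fin p → ℝ) × ℝ) → (Fin p → ℝ) → ℝ)
    (hσmeas : Measurable (Function.uncurry σhat))
    (hσpos : ∀ d x, 0 < σhat d x)
    (α : ℝ) (hα : α ∈ Set.Ioo (0 : ℝ) 1)
    (train : Ω → {i : Fin n // i ∈ I₁} → (Fin p → ℝ) × ℝ)
    (htrain : ∀ ω j, train ω j = D j.1.castSucc ω)
    (Rres : Fin n → Ω → ℝ)
    (hRres : ∀ i ω, Rres i ω =
      |(D i.castSucc ω).2 - μhat (train ω) ((D i.castSucc ω).1)| /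
        σhat (train ω) ((D i.castSucc ω).1))
    (πv : ℝ → Ω → ℝ)
    (hπ : ∀ y ω, πv y ω =
      (1 + (Nat.card {i : {i : Fin n // i ∈ I₂} //
        |y - μhat (train ω) ((D (Fin.last n) ω).1)| /
          σhat (train ω) ((D (Fin.last n) ω).1) ≤ Rres i.1 ω} : ℝ)) /
        (I₂.card + 1)) :
    ENNReal.ofReal (1 - α) ≤ μ {ω | α < πv ((D (Fin.last n) ω).2) ω} ∧
      ((∀ i j : Fin n, i ∈ I₂ → j ∈ I₂ → i ≠ j →
          μ {ω | Rres i ω = Rres j ω} = 0) →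
        (∀ i : Fin n, i ∈ I₂ →
          μ {ω | Rres i ω =
            |(D (Fin.last n) ω).2 - μhat (train ω) ((D (Fin.last n) ω).1)| /
              σhat (train ω) ((D (Fin.last n) ω).1)} = 0) →
        μ {ω | α < πv ((D (Fin.last n) ω).2) ω} ≤
          ENNReal.ofReal (1 - α + 1 / (I₂.card + 1))) := by
  classical
  obtain ⟨hα0, hα1⟩ := hα
  set m := I₂.card with hm
  set e : Fin m ≃o {x // x ∈ I₂} := I₂.orderIsoOfFin rfl with he
  set tr : (Fin (n+1) → (Fin p → ℝ) × ℝ) → ({i : Fin n // i ∈ I₁} → (Fin p → ℝ) × ℝ) :=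
    fun d k => d k.1.castSucc with htr
  set score : (Fin (n+1) → (Fin p → ℝ) × ℝ) → Fin (n+1) → ℝ :=
    fun d j => |(d j).2 - μhat (tr d) (d j).1| / σhat (tr d) (d j).1 with hscore
  set emb : Fin (m+1) → Fin (n+1) :=
    Fin.snoc (fun k : Fin m => ((e k : {x // x ∈ I₂}) : Fin n).castSucc) (Fin.last n) with hemb
  set D' : Ω → Fin (n+1) → (Fin p → ℝ) × ℝ := fun ω j => D j ω with hD'
  set V : Fin (m+1) → Ω → ℝ := fun k ω => score (D' ω) (emb k) with hV
  set t : ℕ := ⌊α * (m+1)⌋₊ with ht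
  -- basic measurability
  have hD'meas : Measurable D' := measurable_pi_lambda _ hDmeas
  have htrmeas : Measurable tr := measurable_pi_lambda _ fun k => measurable_pi_apply _
  have hscoremeas : ∀ j, Measurable fun d => score d j := by
    intro j
    apply Measurable.div
    · apply Measurable.abs
      apply Measurable.sub
      · exact measurable_snd.comp (measurable_pi_apply j)
      · exact hμmeas.comp (htrmeas.prodMk (measurable_fst.comp (measurable_pi_apply j)))
    · exact hσmeas.comp (htrmeas.prodMk (measurable_fst.comp (measurable_pi_apply j)))
  have hVmeas : ∀ k, Measurable (V k) := fun k => (hscoremeas (emb k)).comp hD'meas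
  -- train ω = tr (D' ω)
  have htrD : ∀ ω, train ω = tr (D' ω) := by
    intro ω; funext j; rw [htrain]
  -- emb values
  have hembc : ∀ k : Fin m, emb k.castSucc = ((e k : {x // x ∈ I₂}) : Fin n).castSucc :=
    fun k => Fin.snoc_castSucc _ _ k
  have hembl : emb (Fin.last m) = Fin.last n := Fin.snoc_last _ _
  have hembinj : Function.Injective emb := by
    intro a b hab
    rcases Fin.eq_castSucc_or_eq_last a with ⟨a', rfl⟩ | rfl <;>
      rcases Fin.eq_castSucc_or_eq_last b with ⟨b', rfl⟩ | rfl
    · rw [hembc, hembc] at hab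
      have := Fin.castSucc_injective _ hab
      have : e a' = e b' := Subtype.ext this
      rw [e.injective this]
    · rw [hembc, hembl] at hab
      exact absurd hab ((Fin.castSucc_lt_last _).ne)
    · rw [hembc, hembl] at hab
      exact absurd hab.symm ((Fin.castSucc_lt_last _).ne)
    · rfl
  -- V coordinates as residuals
  have hVcast : ∀ (k : Fin m) (ω : Ω), V k.castSucc ω = Rres ((e k : {x // x ∈ I₂}) : Fin n) ω := by
    intro k ω
    rw [hV]
    simp only
    rw [hembc, hRres, htrD]
  have hVlast : ∀ ω, V (Fin.last m) ω =
      |(D (Fin.last n) ω).2 - μhat (train ω) ((D (Fin.last n) ω).1)| /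
        σhat (train ω) ((D (Fin.last n) ω).1) := by
    intro ω
    rw [hV]
    simp only
    rw [hembl, htrD]
  -- exchangeability of V
  have hexchV : Exchangeable μ V := by
    intro σ
    set f : Fin (m+1) ↪ Fin (n+1) := ⟨emb, hembinj⟩ with hf
    set τ : Equiv.Perm (Fin (n+1)) := σ.viaFintypeEmbedding f with hτ
    have hτemb : ∀ k, τ (emb k) = emb (σ k) := fun k =>
      Equiv.Perm.viaFintypeEmbedding_apply_image σ f k
    have hτfix : ∀ j : Fin n, j ∈ I₁ → τ j.castSucc = j.castSucc := by
      intro j hj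
      apply Equiv.Perm.viaFintypeEmbedding_apply_notMem_range
      rintro ⟨k, hk⟩
      have hk' : emb k = j.castSucc := hk
      rcases Fin.eq_castSucc_or_eq_last k with ⟨k', rfl⟩ | rfl
      · rw [hembc] at hk'
        have : ((e k' : {x // x ∈ I₂}) : Fin n) = j := Fin.castSucc_injective _ hk'
        have hmem : j ∈ I₂ := this ▸ (e k').2
        exact (Finset.disjoint_left.mp hdisj hj) hmem
      · rw [hembl] at hk'
        exact absurd hk'.symm ((Fin.castSucc_lt_last _).ne)
    set pτ : (Fin (n+1) → (Fin p → ℝ) × ℝ) → (Fin (n+1) → (Fin p → ℝ) × ℝ) :=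
      fun d j => d (τ j) with hpτdef
    have hpτ : Measurable pτ := measurable_pi_lambda _ fun j => measurable_pi_apply _
    set H : (Fin (n+1) → (Fin p → ℝ) × ℝ) → Fin (m+1) → ℝ :=
      fun d k => score d (emb k) with hH
    have hHm : Measurable H := measurable_pi_lambda _ fun k => hscoremeas (emb k)
    have htrpτ : ∀ d, tr (pτ d) = tr d := by
      intro d; funext j
      show d (τ j.1.castSucc) = d j.1.castSucc
      rw [hτfix j.1 j.2]
    have hscorepτ : ∀ d j, score (pτ d) j = score d (τ j) := by
      intro d j
      show |((pτ d) j).2 - μhat (tr (pτ d)) ((pτ d) j).1| / σhat (tr (pτ d)) ((pτ d) j).1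
        = _
      rw [htrpτ]
    have key1 : (fun ω (k : Fin (m+1)) => V (σ k) ω) = H ∘ (pτ ∘ D') := by
      funext ω
      show (fun k => score (D' ω) (emb (σ k))) = H (pτ (D' ω))
      funext k
      show score (D' ω) (emb (σ k)) = score (pτ (D' ω)) (emb k)
      exact ((hscorepτ (D' ω) (emb k)).trans (congrArg _ (hτemb k))).symm
    have key2 : (fun ω (k : Fin (m+1)) => V k ω) = H ∘ D' := rfl
    rw [key1, key2]
    rw [← Measure.map_map hHm (hpτ.comp hD'meas), ← Measure.map_map hHm hD'meas]
    congr 1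
    rw [← Measure.map_map hpτ hD'meas]
    have hcomp : pτ ∘ D' = fun ω (j : Fin (n+1)) => D (τ j) ω := rfl
    rw [Measure.map_map hpτ hD'meas, hcomp, hexch τ]
  -- the coverage event
  obtain ⟨hEm, hle, heqc⟩ := exch_rank μ m t V hVmeas hexchV
  set E : Set Ω := {ω | cntAux (fun i => V i ω) (Fin.last m) < t} with hE
  have hmpos : (0:ℝ) < (m:ℝ) + 1 := Nat.cast_add_one_pos m
  have hsetid : {ω | α < πv ((D (Fin.last n) ω).2) ω} = Eᶜ := by
    ext ω
    simp only [Set.mem_setOf_eq, Set.mem_compl_iff, hE, not_lt]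
    rw [hπ]
    have hNat : (Nat.card {i : {i : Fin n // i ∈ I₂} //
        |(D (Fin.last n) ω).2 - μhat (train ω) ((D (Fin.last n) ω).1)| /
          σhat (train ω) ((D (Fin.last n) ω).1) ≤ Rres i.1 ω})
        = cntAux (fun i => V i ω) (Fin.last m) := by
      rw [Nat.card_eq_fintype_card, Fintype.card_subtype]
      unfold cntAux
      apply Finset.card_bij (fun i _ => (e.symm i).castSucc)
      · intro i hi
        rw [Finset.mem_filter] at hi ⊢
        refine ⟨Finset.mem_erase.mpr ⟨(Fin.castSucc_lt_last _).ne, Finset.mem_univ _⟩, ?_⟩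
        show V (Fin.last m) ω ≤ V ((e.symm i).castSucc) ω
        rw [hVlast, hVcast]
        simpa using hi.2
      · intro a _ b _ hab
        exact e.symm.injective (Fin.castSucc_injective _ hab)
      · intro b hb
        rw [Finset.mem_filter, Finset.mem_erase] at hb
        obtain ⟨k, rfl⟩ := Fin.exists_castSucc_eq.mpr hb.1.1
        refine ⟨e k, ?_, by simp⟩
        rw [Finset.mem_filter]
        refine ⟨Finset.mem_univ _, ?_⟩
        have h2 : V (Fin.last m) ω ≤ V k.castSucc ω := hb.2
        rw [hVlast, hVcast] at h2
        exact h2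
    rw [hNat]
    set N := cntAux (fun i => V i ω) (Fin.last m) with hN
    rw [ht]
    constructor
    · intro h
      have h1 : α * ((m:ℝ)+1) < 1 + N := (lt_div_iff₀ hmpos).mp h
      have h2 : ⌊α * ((m:ℝ)+1)⌋₊ < N + 1 := by
        rw [Nat.floor_lt (mul_nonneg hα0.le hmpos.le)]
        push_cast
        linarith
      exact Nat.lt_succ_iff.mp h2
    · intro h
      have h3 : (⌊α * ((m:ℝ)+1)⌋₊ : ℝ) + 1 ≤ (N:ℝ) + 1 := by exact_mod_cast Nat.succ_le_succ h
      have h4 := Nat.lt_floor_add_one (α * ((m:ℝ)+1))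
      rw [lt_div_iff₀ hmpos]
      push_cast
      linarith
  have hEc : μ Eᶜ = 1 - μ E := prob_compl_eq_one_sub hEm
  have hofm : ENNReal.ofReal ((m:ℝ)+1) = (m:ℝ≥0∞) + 1 := by
    rw [ENNReal.ofReal_add (Nat.cast_nonneg m) zero_le_one, ENNReal.ofReal_natCast,
      ENNReal.ofReal_one]
  constructor
  · rw [hsetid, hEc]
    have hqα : μ E ≤ ENNReal.ofReal α := by
      have h1 : (t : ℝ≥0∞) ≤ ((m:ℝ≥0∞)+1) * ENNReal.ofReal α := by
        rw [← ENNReal.ofReal_natCast t, ← hofm, ← ENNReal.ofReal_mul hmpos.le]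
        apply ENNReal.ofReal_le_ofReal
        calc (t:ℝ) ≤ α * ((m:ℝ)+1) := Nat.floor_le (mul_nonneg hα0.le hmpos.le)
          _ = ((m:ℝ)+1) * α := mul_comm _ _
      have h2 : ((m:ℝ≥0∞)+1) * μ E ≤ ((m:ℝ≥0∞)+1) * ENNReal.ofReal α := le_trans hle h1
      exact (ENNReal.mul_le_mul_iff_right (by simp) (by simp)).mp h2
    calc ENNReal.ofReal (1 - α) = 1 - ENNReal.ofReal α := by
          rw [ENNReal.ofReal_sub _ hα0.le, ENNReal.ofReal_one]
      _ ≤ 1 - μ E := tsub_le_tsub_left hqα 1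
  · intro hpair htest
    have h0 : ∀ k l : Fin (m+1), k ≠ l → μ {ω | V k ω = V l ω} = 0 := by
      intro k l hkl
      rcases Fin.eq_castSucc_or_eq_last k with ⟨a, rfl⟩ | rfl <;>
        rcases Fin.eq_castSucc_or_eq_last l with ⟨b, rfl⟩ | rfl
      · have hab : ((e a : {x // x ∈ I₂}) : Fin n) ≠ ((e b : {x // x ∈ I₂}) : Fin n) := by
          intro hcontra
          apply hkl
          have h8 : a = b := e.injective (Subtype.ext hcontra)
          rw [h8]
        have hseteq : {ω | V a.castSucc ω = V b.castSucc ω}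
            = {ω | Rres ((e a : {x // x ∈ I₂}) : Fin n) ω
                = Rres ((e b : {x // x ∈ I₂}) : Fin n) ω} := by
          ext ω; simp only [Set.mem_setOf_eq, hVcast]
        rw [hseteq]
        exact hpair _ _ (e a).2 (e b).2 hab
      · have hseteq : {ω | V a.castSucc ω = V (Fin.last m) ω}
            = {ω | Rres ((e a : {x // x ∈ I₂}) : Fin n) ω =
              |(D (Fin.last n) ω).2 - μhat (train ω) ((D (Fin.last n) ω).1)| /
                σhat (train ω) ((D (Fin.last n) ω).1)} := by
          ext ω; simp only [Set.mem_setOf_eq, hVcast, hVlast]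
        rw [hseteq]
        exact htest _ (e a).2
      · have hseteq : {ω | V (Fin.last m) ω = V b.castSucc ω}
            = {ω | Rres ((e b : {x // x ∈ I₂}) : Fin n) ω =
              |(D (Fin.last n) ω).2 - μhat (train ω) ((D (Fin.last n) ω).1)| /
                σhat (train ω) ((D (Fin.last n) ω).1)} := by
          ext ω; simp only [Set.mem_setOf_eq, hVcast, hVlast]
          exact eq_comm
        rw [hseteq]
        exact htest _ (e b).2
      · exact absurd rfl hkl
    have hinj : ∀ᵐ ω ∂μ, Function.Injective fun i => V i ω := by
      have hae : ∀ᵐ ω ∂μ, ∀ k l : Fin (m+1), k ≠ l → V k ω ≠ V l ω := by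
        rw [MeasureTheory.ae_all_iff]
        intro k
        rw [MeasureTheory.ae_all_iff]
        intro l
        rcases eq_or_ne k l with rfl | hkl
        · filter_upwards with ω hcontra
          exact absurd rfl hcontra
        · have hnull := h0 k l hkl
          rw [ae_iff]
          apply measure_mono_null _ hnull
          intro ω hω
          simp only [Set.mem_setOf_eq] at hω ⊢
          push_neg at hω
          exact hω.2
      filter_upwards [hae] with ω hω
      intro a b hab
      by_contra hne
      exact hω a b hne hab
    have htm : t ≤ m + 1 := by
      have h5 : α * ((m:ℝ)+1) ≤ ((m+1 : ℕ) : ℝ) := by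
        push_cast
        nlinarith
      calc t ≤ ⌊((m+1 : ℕ) : ℝ)⌋₊ := Nat.floor_le_floor h5
        _ = m + 1 := Nat.floor_natCast _
    have heq := heqc hinj htm
    rw [hsetid, hEc]
    rcases le_or_gt α (1/((m:ℝ)+1)) with hcase | hcase
    · calc 1 - μ E ≤ 1 := tsub_le_self
        _ = ENNReal.ofReal 1 := ENNReal.ofReal_one.symm
        _ ≤ _ := ENNReal.ofReal_le_ofReal (by
            have h9 : 0 < 1/((m:ℝ)+1) := one_div_pos.mpr hmpos
            linarith)
    · have hx0 : 0 ≤ α - 1/((m:ℝ)+1) := by linarith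
      have hxle : ENNReal.ofReal (α - 1/((m:ℝ)+1)) ≤ μ E := by
        have h1 : ((m:ℝ≥0∞)+1) * ENNReal.ofReal (α - 1/((m:ℝ)+1)) ≤ (t:ℝ≥0∞) := by
          rw [← ENNReal.ofReal_natCast t, ← hofm, ← ENNReal.ofReal_mul hmpos.le]
          apply ENNReal.ofReal_le_ofReal
          have h4 := Nat.lt_floor_add_one (α * ((m:ℝ)+1))
          have h6 : ((m:ℝ)+1) * (α - 1/((m:ℝ)+1)) = α*((m:ℝ)+1) - 1 := by
            field_simp
          rw [h6]
          linarith
        rw [← heq] at h1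
        exact (ENNReal.mul_le_mul_iff_right (by simp) (by simp)).mp h1
      calc 1 - μ E ≤ 1 - ENNReal.ofReal (α - 1/((m:ℝ)+1)) := tsub_le_tsub_left hxle 1
        _ ≤ ENNReal.ofReal (1 - (α - 1/((m:ℝ)+1))) := by
            rw [tsub_le_iff_right, ← ENNReal.ofReal_add (by have h9 : 0 < 1/((m:ℝ)+1) := one_div_pos.mpr hmpos; linarith) hx0,
              show (1 - (α - 1/((m:ℝ)+1))) + (α - 1/((m:ℝ)+1)) = 1 by ring,
              ENNReal.ofReal_one]
        _ = ENNReal.ofReal (1 - α + 1/((m:ℝ)+1)) := by ring_nf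
end

section
/- For sample size n, suppose the AIC values IC_1, …, IC_M of M candidate models satisfy IC_m − IC_{m*} = (n+1) Δ_m + 2 (p_m − p_{m*}) + ε_{m,n} with each ε_{m,n} = O_p(1), where m* attains the smallest KLIC, and let the tied set K_min = {m : Δ_m = 0} possibly contain several models, with Δ° = min_{m ∉ K_min} Δ_m > 0. Let ŵ_m = exp(−IC_m/2) / Σ_{s=1}^M exp(−IC_s/2). Then Σ_{m ∈ K_min} ŵ_m − 1 = O_p(e^{−n Δ° / 2}), and ŵ_m = O_p(e^{−n Δ_m / 2}) for every m ∉ K_min. -/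
open MeasureTheory Set

open scoped Classical

/-!
Write `Eₘ = ICₘ − IC_{m*} − ((n+1)Δₘ + 2(pₘ − p_{m*}))`. Comparing the numerator of `ŵₘ` with
the single term `exp(−IC_{m*}/2)` of the denominator gives `ŵₘ ≤ exp((IC_{m*} − ICₘ)/2)`, which
on the event `{|Eᵢ| ≤ K for all i}` is at most `Cₘ(K) · e^{−nΔₘ/2}` with
`Cₘ(K) = exp((K − Δₘ)/2 − (pₘ − p_{m*}))`. Since the weights sum to
one, `|Σ_{K_min} ŵₘ − 1| = Σ_{m ∉ K_min} ŵₘ ≤ (Σ_{m ∉ K_min} Cₘ(K)) · e^{−nΔ°/2}`. Finitely many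
`O_p(1)` errors are bounded by a common `K` outside an event of probability at most `δ`.
-/

namespace SmoothedIC

section Weights

variable {ι : Type*} [Fintype ι]

noncomputable def icWeight (x : ι → ℝ) (i : ι) : ℝ :=
  Real.exp (-x i / 2) / ∑ s, Real.exp (-x s / 2)

lemma icWeight_nonneg (x : ι → ℝ) (i : ι) : 0 ≤ icWeight x i :=
  div_nonneg (Real.exp_pos _).le (Finset.sum_nonneg fun _ _ => (Real.exp_pos _).le)

lemma sum_icWeight [Nonempty ι] (x : ι → ℝ) : ∑ i, icWeight x i = 1 := by
  simp only [icWeight, ← Finset.sum_div]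
  exact div_self (Finset.sum_pos (fun _ _ => Real.exp_pos _) Finset.univ_nonempty).ne'

lemma icWeight_le_exp_sub (x : ι → ℝ) (i j : ι) :
    icWeight x i ≤ Real.exp ((x j - x i) / 2) := by
  have hj : Real.exp (-x j / 2) ≤ ∑ s, Real.exp (-x s / 2) :=
    Finset.single_le_sum (f := fun s => Real.exp (-x s / 2))
      (fun _ _ => (Real.exp_pos _).le) (Finset.mem_univ j)
  calc icWeight x i ≤ Real.exp (-x i / 2) / Real.exp (-x j / 2) :=
        div_le_div_of_nonneg_left (Real.exp_pos _).le (Real.exp_pos _) hj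
    _ = Real.exp ((x j - x i) / 2) := by rw [← Real.exp_sub]; ring_nf

lemma icWeight_le_of_add_le_sub {x : ι → ℝ} {i j : ι} {t c : ℝ} (h : t + c ≤ x i - x j) :
    icWeight x i ≤ Real.exp (-c / 2) * Real.exp (-t / 2) := by
  rw [← Real.exp_add]
  exact (icWeight_le_exp_sub x i j).trans (Real.exp_le_exp.2 (by linarith))

lemma abs_sum_filter_icWeight_sub_one [Nonempty ι] (x : ι → ℝ) (P : ι → Prop)
    [DecidablePred P] :
    |∑ i ∈ Finset.univ.filter P, icWeight x i - 1| =
      ∑ i ∈ Finset.univ.filter (fun i => ¬P i), icWeight x i := by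
  rw [← sum_icWeight x, ← Finset.sum_filter_add_sum_filter_not Finset.univ P, sub_add_cancel_left,
    abs_neg, abs_of_nonneg (Finset.sum_nonneg fun i _ => icWeight_nonneg x i)]

end Weights

section InProbability

variable {Ω : Type*} [MeasurableSpace Ω] {μ : Measure Ω}

def IsBigOInProbability (μ : Measure Ω) (X : ℕ → Ω → ℝ) (a : ℕ → ℝ) : Prop :=
  ∀ δ > (0 : ℝ), ∃ K : ℝ, ∀ n : ℕ, μ {ω | K * a n < |X n ω|} ≤ ENNReal.ofReal δ

lemma isBigOInProbability_one_iff {X : ℕ → Ω → ℝ} :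
    IsBigOInProbability μ X 1 ↔
      ∀ δ > (0 : ℝ), ∃ K : ℝ, ∀ n : ℕ, μ {ω | K < |X n ω|} ≤ ENNReal.ofReal δ := by
  simp only [IsBigOInProbability, Pi.one_apply, mul_one]

lemma exists_uniform_bound_of_isBigOInProbability_one {ι : Type*} [Fintype ι]
    {X : ι → ℕ → Ω → ℝ} (hX : ∀ i, IsBigOInProbability μ (X i) 1) {δ : ℝ} (hδ : 0 < δ) :
    ∃ K : ℝ, ∀ n : ℕ, μ {ω | ∃ i, K < |X i n ω|} ≤ ENNReal.ofReal δ := by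
  rcases isEmpty_or_nonempty ι with _ | _
  · exact ⟨0, fun n => by simp⟩
  have hcard : (0 : ℝ) < Fintype.card ι := by exact_mod_cast Fintype.card_pos
  choose K hK using fun i => isBigOInProbability_one_iff.1 (hX i) (δ / Fintype.card ι)
    (div_pos hδ hcard)
  refine ⟨∑ i, |K i|, fun n => ?_⟩
  have hsub : {ω | ∃ i, ∑ j, |K j| < |X i n ω|} ⊆ ⋃ i, {ω | K i < |X i n ω|} := by
    rintro ω ⟨i, hi⟩
    have hKi : K i ≤ ∑ j, |K j| :=
      (le_abs_self _).trans (Finset.single_le_sum (fun j _ => abs_nonneg (K j)) (Finset.mem_univ i))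
    exact mem_iUnion.2 ⟨i, hKi.trans_lt hi⟩
  calc μ _ ≤ ∑ i, μ {ω | K i < |X i n ω|} :=
        (measure_mono hsub).trans (measure_iUnion_fintype_le _ _)
    _ ≤ ∑ _i : ι, ENNReal.ofReal (δ / Fintype.card ι) := Finset.sum_le_sum fun i _ => hK i n
    _ = ENNReal.ofReal δ := by
      rw [Finset.sum_const, Finset.card_univ, nsmul_eq_mul, ← ENNReal.ofReal_natCast,
        ← ENNReal.ofReal_mul (Nat.cast_nonneg _), mul_div_cancel₀ _ hcard.ne']

lemma IsBigOInProbability.of_forall_abs_le {ι : Type*} [Fintype ι] (X : ι → ℕ → Ω → ℝ)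
    (hX : ∀ i, IsBigOInProbability μ (X i) 1) {Y : ℕ → Ω → ℝ} {a : ℕ → ℝ} (C : ℝ → ℝ)
    (hY : ∀ K n ω, (∀ i, |X i n ω| ≤ K) → |Y n ω| ≤ C K * a n) :
    IsBigOInProbability μ Y a := by
  intro δ hδ
  obtain ⟨K, hK⟩ := exists_uniform_bound_of_isBigOInProbability_one hX hδ
  refine ⟨C K, fun n => (measure_mono fun ω hω => ?_).trans (hK n)⟩
  change ∃ i, K < |X i n ω|
  by_contra! hbad
  exact (hY K n ω hbad).not_gt hω

end InProbability

end SmoothedIC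

open SmoothedIC in
theorem saic_weights_tied_klic_general
    {Ω : Type*} [MeasurableSpace Ω] (μ : Measure Ω)
    (M : ℕ) (IC : ℕ → Fin M → Ω → ℝ)
    (Δ : Fin M → ℝ) (p : Fin M → ℕ) (mstar : Fin M)
    (heps : ∀ m : Fin M, ∀ δ > (0 : ℝ), ∃ K : ℝ, ∀ n : ℕ,
      μ {ω | K < |IC n m ω - IC n mstar ω -
        ((n + 1 : ℝ) * Δ m + 2 * ((p m : ℝ) - (p mstar : ℝ)))|} ≤
        ENNReal.ofReal δ)
    (what : ℕ → Fin M → Ω → ℝ)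
    (hwhat : ∀ n m ω, what n m ω =
      Real.exp (-(IC n m ω) / 2) / ∑ s, Real.exp (-(IC n s ω) / 2))
    (Δcirc : ℝ)
    (hΔcirc : IsLeast {d | ∃ m, Δ m ≠ 0 ∧ d = Δ m} Δcirc) :
    (∀ δ > (0 : ℝ), ∃ K : ℝ, ∀ n : ℕ,
      μ {ω | K * Real.exp (-(n * Δcirc) / 2) <
        |(∑ m ∈ Finset.univ.filter (fun m => Δ m = 0), what n m ω) - 1|} ≤
        ENNReal.ofReal δ) ∧
    (∀ m : Fin M, Δ m ≠ 0 → ∀ δ > (0 : ℝ), ∃ K : ℝ, ∀ n : ℕ,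
      μ {ω | K * Real.exp (-(n * Δ m) / 2) < |what n m ω|} ≤
        ENNReal.ofReal δ) := by
  obtain rfl : what = fun n m ω => icWeight (IC n · ω) m := by
    funext n m ω; exact hwhat n m ω
  have : Nonempty (Fin M) := ⟨mstar⟩
  set E : Fin M → ℕ → Ω → ℝ := fun m n ω =>
    IC n m ω - IC n mstar ω - ((n + 1 : ℝ) * Δ m + 2 * ((p m : ℝ) - (p mstar : ℝ)))
  have hE : ∀ m, IsBigOInProbability μ (E m) 1 := fun m => isBigOInProbability_one_iff.2 (heps m)
  set C : Fin M → ℝ → ℝ := fun m K => Real.exp (-(Δ m + 2 * ((p m : ℝ) - p mstar) - K) / 2)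
  have hweight : ∀ K n ω m, (∀ i, |E i n ω| ≤ K) →
      icWeight (IC n · ω) m ≤ C m K * Real.exp (-(n * Δ m) / 2) := fun K n ω m hK =>
    icWeight_le_of_add_le_sub (j := mstar) (by have := (abs_le.1 (hK m)).1; linarith)
  refine ⟨IsBigOInProbability.of_forall_abs_le E hE
    (fun K => ∑ m ∈ Finset.univ.filter (fun m => Δ m ≠ 0), C m K) fun K n ω hK => ?_,
    fun m _ => IsBigOInProbability.of_forall_abs_le E hE (C m) fun K n ω hK => ?_⟩
  · rw [abs_sum_filter_icWeight_sub_one, Finset.sum_mul]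
    refine Finset.sum_le_sum fun m hm => (hweight K n ω m hK).trans ?_
    have hΔm : Δcirc ≤ Δ m := hΔcirc.2 ⟨m, (Finset.mem_filter.1 hm).2, rfl⟩
    gcongr
  · rw [abs_of_nonneg (icWeight_nonneg _ m)]
    exact hweight K n ω m hK

/-- concentration of smoothed AIC weights when several models may tie
for the smallest KLIC.  If `IC_m − IC_{m*} = (n+1)Δ_m + 2(p_m − p_{m*}) + ε_{m,n}`
with `ε_{m,n} = O_p(1)` and `Δ° = min_{m ∉ K_min} Δ_m > 0`, where
`K_min = {m : Δ_m = 0}`, then `Σ_{m ∈ K_min} ŵ_m − 1 = O_p(e^{−nΔ°/2})` and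
`ŵ_m = O_p(e^{−nΔ_m/2})` for every `m ∉ K_min`. -/
theorem saic_weights_tied_klic
    {Ω : Type*} [MeasurableSpace Ω] (μ : Measure Ω) [IsProbabilityMeasure μ]
    (M : ℕ) (IC : ℕ → Fin M → Ω → ℝ)
    (Δ : Fin M → ℝ) (p : Fin M → ℕ) (mstar : Fin M)
    (hΔstar : Δ mstar = 0)
    (hΔnonneg : ∀ m, 0 ≤ Δ m)
    (heps : ∀ m : Fin M, ∀ δ > (0 : ℝ), ∃ K : ℝ, ∀ n : ℕ,
      μ {ω | K < |IC n m ω - IC n mstar ω -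
        ((n + 1 : ℝ) * Δ m + 2 * ((p m : ℝ) - (p mstar : ℝ)))|} ≤
        ENNReal.ofReal δ)
    (what : ℕ → Fin M → Ω → ℝ)
    (hwhat : ∀ n m ω, what n m ω =
      Real.exp (-(IC n m ω) / 2) / ∑ s, Real.exp (-(IC n s ω) / 2))
    (Δcirc : ℝ)
    (hΔcirc : IsLeast {d | ∃ m, Δ m ≠ 0 ∧ d = Δ m} Δcirc)
    (hΔcircpos : 0 < Δcirc) :
    (∀ δ > (0 : ℝ), ∃ K : ℝ, ∀ n : ℕ,
      μ {ω | K * Real.exp (-(n * Δcirc) / 2) <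
        |(∑ m ∈ Finset.univ.filter (fun m => Δ m = 0), what n m ω) - 1|} ≤
        ENNReal.ofReal δ) ∧
    (∀ m : Fin M, Δ m ≠ 0 → ∀ δ > (0 : ℝ), ∃ K : ℝ, ∀ n : ℕ,
      μ {ω | K * Real.exp (-(n * Δ m) / 2) < |what n m ω|} ≤
        ENNReal.ofReal δ) :=
  saic_weights_tied_klic_general μ M IC Δ p mstar heps what hwhat Δcirc hΔcirc
end

section
/- Fix α ∈ (0,1). Let (e_i)_{i≥1} be a stationary and ergodic sequence of real-valued random variables whose common distribution function F has a density bounded by a finite constant on an open neighborhood of s := inf{t ∈ ℝ : F(t) ≥ 1 − α} and is strictly increasing at s. For each n, let ê_{1,n}, …, ê_{n,n} be random variables satisfying max_{1 ≤ i ≤ n} |ê_{i,n} − e_i| → 0 in probability as n → ∞. Then the ⌈(1−α) n⌉-th smallest value among ê_{1,n}, …, ê_{n,n} converges in probability to s. -/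
/-!
By the mean ergodic theorem (von Neumann's theorem in `L²`, read as convergence in probability),
the fraction of `e_0, …, e_{n-1}` below any level `t` tends to `F t`. Once
`max_{i<n} |ê_{i,n} - e_i| ≤ η`, the `k`-th smallest `ê` exceeds `a` as soon as fewer than `k`
of the `e_i` lie below `a + η`, and is at most `b` as soon as at least `k` of them lie below
`b - η`. With `k = ⌈(1-α)n⌉` both happen with probability tending to one when `a < s < b`:
below `s` the distribution function stays under `1 - α` by definition of `s`, above `s` it
exceeds `1 - α` because it is strictly increasing at `s`.
-/

open MeasureTheory Filter Set

/-- The shift map on paths. -/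
def pathShift {E : Type*} : (ℕ → E) → (ℕ → E) := fun f i => f (i + 1)

/-- A process is stationary and ergodic if the shift map is an ergodic
measure-preserving transformation of its path law. -/
def StationaryErgodic {Ω E : Type*} [MeasurableSpace Ω] [MeasurableSpace E]
    (μ : Measure Ω) (V : ℕ → Ω → E) : Prop :=
  Ergodic pathShift (Measure.map (fun ω (i : ℕ) => V i ω) μ)

/-- The `k`-th smallest value among `v 0, …, v (n-1)`. -/
noncomputable def kthSmallest (n k : ℕ) (v : ℕ → ℝ) : ℝ :=
  sInf {t : ℝ | k ≤ Nat.card {i : ℕ // i < n ∧ v i ≤ t}}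

open scoped ENNReal Topology

noncomputable def countLE (n : ℕ) (v : ℕ → ℝ) (t : ℝ) : ℕ :=
  ((Finset.range n).filter fun i => v i ≤ t).card

lemma countLE_le (n : ℕ) (v : ℕ → ℝ) (t : ℝ) : countLE n v t ≤ n :=
  (Finset.card_filter_le _ _).trans (Finset.card_range n).le

lemma countLE_le_countLE {n : ℕ} {v w : ℕ → ℝ} {t t' : ℝ}
    (h : ∀ i < n, v i ≤ t → w i ≤ t') : countLE n v t ≤ countLE n w t' :=
  Finset.card_le_card fun i hi => by
    simp only [Finset.mem_filter, Finset.mem_range] at hi ⊢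
    exact ⟨hi.1, h i hi.1 hi.2⟩

lemma upperSemicontinuous_countLE (n : ℕ) (v : ℕ → ℝ) : UpperSemicontinuous (countLE n v) := by
  have : countLE n v = fun t => ∑ i ∈ Finset.range n, (Ici (v i)).indicator 1 t := by
    ext t
    simp only [countLE, Finset.card_filter, Set.indicator_apply, mem_Ici, Pi.one_apply]
  rw [this]
  exact upperSemicontinuous_sum fun i _ => isClosed_Ici.upperSemicontinuous_indicator zero_le_one

lemma kthSmallest_eq_sInf (n k : ℕ) (v : ℕ → ℝ) :
    kthSmallest n k v = sInf {t | k ≤ countLE n v t} := by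
  have hcard (t : ℝ) : Nat.card {i : ℕ // i < n ∧ v i ≤ t} = countLE n v t := by
    rw [countLE, ← Nat.card_eq_finsetCard]
    exact Nat.card_congr (Equiv.subtypeEquivRight (by simp))
  simp only [kthSmallest, hcard]

lemma kthSmallest_le_iff {n k : ℕ} (hk : 0 < k) (hkn : k ≤ n) (v : ℕ → ℝ) (t : ℝ) :
    kthSmallest n k v ≤ t ↔ k ≤ countLE n v t := by
  set S := {t | k ≤ countLE n v t}
  have hmono : ∀ {a b}, a ≤ b → a ∈ S → b ∈ S := fun hab ha =>
    ha.trans (countLE_le_countLE fun _ _ hi => hi.trans hab)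
  have hbdd : BddBelow S := by
    refine ⟨(Finset.range n).inf' ⟨0, Finset.mem_range.2 (hk.trans_le hkn)⟩ v, fun u hu => ?_⟩
    obtain ⟨i, hi⟩ := Finset.card_pos.1 (hk.trans_le hu)
    simp only [Finset.mem_filter] at hi
    exact (Finset.inf'_le _ hi.1).trans hi.2
  have hne : S.Nonempty := by
    refine ⟨(Finset.range n).sup' ⟨0, Finset.mem_range.2 (hk.trans_le hkn)⟩ v, ?_⟩
    rwa [Set.mem_ofPred_eq, countLE, Finset.filter_true_of_mem fun i hi => Finset.le_sup' v hi,
      Finset.card_range]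
  rw [kthSmallest_eq_sInf]
  have hclosed : IsClosed S := (upperSemicontinuous_countLE n v).isClosed_preimage k
  exact ⟨fun h => hmono h (hclosed.csInf_mem hne hbdd), fun h => csInf_le hbdd h⟩

lemma kthSmallest_mem_Ioc {n k : ℕ} {v w : ℕ → ℝ} {η a b : ℝ}
    (hvw : ∀ i < n, |v i - w i| ≤ η)
    (ha : countLE n w (a + η) < k) (hb : k ≤ countLE n w (b - η)) :
    kthSmallest n k v ∈ Ioc a b := by
  have hk : 0 < k := (Nat.zero_le _).trans_lt ha
  have hkn : k ≤ n := hb.trans (countLE_le n w _)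
  constructor
  · by_contra! h
    rw [kthSmallest_le_iff hk hkn] at h
    refine ha.not_ge (h.trans (countLE_le_countLE fun i hi hvi => ?_))
    linarith [(abs_le.1 (hvw i hi)).1]
  · rw [kthSmallest_le_iff hk hkn]
    refine hb.trans (countLE_le_countLE fun i hi hwi => ?_)
    linarith [(abs_le.1 (hvw i hi)).2]

lemma kthSmallest_ceil_mem_Ioc {n : ℕ} (hn : 0 < n) {p η a b : ℝ} {v w : ℕ → ℝ}
    (hvw : ∀ i < n, |v i - w i| ≤ η)
    (ha : (countLE n w (a + η) : ℝ) / n < p) (hb : p < (countLE n w (b - η) : ℝ) / n) :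
    kthSmallest n ⌈p * n⌉₊ v ∈ Ioc a b := by
  have hn' : (0 : ℝ) < n := Nat.cast_pos.2 hn
  refine kthSmallest_mem_Ioc hvw (Nat.lt_ceil.2 ?_) (Nat.ceil_le.2 ?_)
  · rwa [div_lt_iff₀ hn'] at ha
  · exact ((lt_div_iff₀ hn').1 hb).le

section Ergodic

variable {X : Type*} [MeasurableSpace X] {ν : Measure X} {T : X → X}

lemma MeasureTheory.MeasurePreserving.integral_birkhoffAverage {E : Type*} [NormedAddCommGroup E]
    [NormedSpace ℝ E] (hT : MeasurePreserving T ν ν) {f : X → E} (hf : Integrable f ν) {n : ℕ}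
    (hn : n ≠ 0) : ∫ x, birkhoffAverage ℝ T f n x ∂ν = ∫ x, f x ∂ν := by
  have hcomp (k : ℕ) : ∫ x, f (T^[k] x) ∂ν = ∫ x, f x ∂ν := by
    have hmap := (hT.iterate k).map_eq
    rw [← integral_map (hT.iterate k).aemeasurable (hmap.symm ▸ hf.aestronglyMeasurable), hmap]
  have hint (k : ℕ) : Integrable (fun x => f (T^[k] x)) ν :=
    (hT.iterate k).integrable_comp_of_integrable hf
  simp only [birkhoffAverage, birkhoffSum, integral_smul, integral_finsetSum _ fun k _ => hint k,
    hcomp, Finset.sum_const, Finset.card_range, ← Nat.cast_smul_eq_nsmul ℝ, smul_smul,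
    inv_mul_cancel₀ (Nat.cast_ne_zero.2 hn : (n : ℝ) ≠ 0), one_smul]

lemma MeasureTheory.Lp.birkhoffSum_compMeasurePreserving_ae_eq {E : Type*} [NormedAddCommGroup E]
    {p : ℝ≥0∞} (hT : MeasurePreserving T ν ν) (g : Lp E p ν) (n : ℕ) :
    ⇑(birkhoffSum (Lp.compMeasurePreserving T hT) id n g) =ᵐ[ν] birkhoffSum T g n := by
  induction n with
  | zero => simpa [birkhoffSum_zero'] using Lp.coeFn_zero E p ν
  | succ n ih =>
    have hiter : ⇑((Lp.compMeasurePreserving T hT)^[n] g) =ᵐ[ν] g ∘ T^[n] := by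
      rw [Lp.compMeasurePreserving_iterate]
      exact Lp.coeFn_compMeasurePreserving g _
    filter_upwards [Lp.coeFn_add (birkhoffSum (Lp.compMeasurePreserving T hT) id n g)
      ((Lp.compMeasurePreserving T hT)^[n] g), ih, hiter] with x hadd hsum hx
    simp only [birkhoffSum_succ, id, hadd, Pi.add_apply, hsum, hx, Function.comp_apply]

/-- Von Neumann's theorem in `L²` gives a limit fixed by the Koopman operator, which ergodicity
forces to be constant; integrating identifies the constant. -/
theorem Ergodic.tendstoInMeasure_birkhoffAverage [IsProbabilityMeasure ν] (hT : Ergodic T ν)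
    {f : X → ℝ} (hf : MemLp f 2 ν) :
    TendstoInMeasure ν (birkhoffAverage ℝ T f) atTop (fun _ => ∫ x, f x ∂ν) := by
  have hmp := hT.toMeasurePreserving
  set U : Lp ℝ 2 ν →L[ℝ] Lp ℝ 2 ν := (Lp.compMeasurePreservingₗᵢ ℝ T hmp).toContinuousLinearMap
  have hU : ⇑U = Lp.compMeasurePreserving T hmp := rfl
  set x := hf.toLp f
  obtain ⟨⟨Y, hY⟩, hconv⟩ : ∃ Y : U.eqLocus 1,
      Tendsto (birkhoffAverage ℝ U id · x) atTop (𝓝 (Y : Lp ℝ 2 ν)) :=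
    ⟨_, U.tendsto_birkhoffAverage_orthogonalProjection
      (LinearIsometry.norm_toContinuousLinearMap_le _) x⟩
  have havg (n : ℕ) : ⇑(birkhoffAverage ℝ U id n x) =ᵐ[ν] birkhoffAverage ℝ T f n := by
    filter_upwards [Lp.coeFn_smul ((n : ℝ)⁻¹) (birkhoffSum U id n x),
      Lp.birkhoffSum_compMeasurePreserving_ae_eq hmp x n,
      hmp.quasiMeasurePreserving.birkhoffSum_ae_eq_of_ae_eq hf.coeFn_toLp n] with y h₁ h₂ h₃
    rw [birkhoffAverage, h₁, Pi.smul_apply, hU, h₂, h₃]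
    rfl
  obtain ⟨c, hc⟩ : ∃ c, ⇑Y =ᵐ[ν] Function.const X c := by
    refine hT.quasiErgodic.ae_eq_const_of_ae_eq_comp₀
      (Lp.aestronglyMeasurable Y).aemeasurable.nullMeasurable ?_
    have hfix : Lp.compMeasurePreserving T hmp Y = Y := hY
    have hcomp := Lp.coeFn_compMeasurePreserving Y hmp
    rw [hfix] at hcomp
    exact hcomp.symm
  have hmean : c = ∫ x, f x ∂ν := by
    set one := indicatorConstLp 2 MeasurableSet.univ (measure_ne_top ν univ) (1 : ℝ)
    have hinner (g : Lp ℝ 2 ν) : inner ℝ one g = ∫ x, g x ∂ν := by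
      rw [L2.inner_indicatorConstLp_one, Measure.restrict_univ]
    have hlim := (tendsto_const_nhds (x := one)).inner (𝕜 := ℝ) hconv
    simp only [hinner, integral_congr_ae hc] at hlim
    refine tendsto_nhds_unique (hlim.trans_eq (by simp)) (tendsto_const_nhds.congr' ?_)
    filter_upwards [eventually_ne_atTop 0] with n hn
    rw [integral_congr_ae (havg n), hmp.integral_birkhoffAverage (hf.integrable one_le_two) hn]
  exact (tendstoInMeasure_of_tendsto_Lp hconv).congr havg (hc.trans (by rw [hmean]; rfl))

end Ergodic

lemma MeasureTheory.TendstoInMeasure.comp_of_map {α β ι E : Type*} [MeasurableSpace α]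
    [MeasurableSpace β] [EDist E] {μ : Measure α} {Φ : α → β} (hΦ : AEMeasurable Φ μ)
    {l : Filter ι} {f : ι → β → E} {g : β → E} (h : TendstoInMeasure (μ.map Φ) f l g) :
    TendstoInMeasure μ (fun i => f i ∘ Φ) l (g ∘ Φ) := fun ε hε =>
  tendsto_of_tendsto_of_tendsto_of_le_of_le tendsto_const_nhds (h ε hε) (fun _ => zero_le)
    fun _ => Measure.le_map_apply hΦ _

lemma MeasureTheory.TendstoInMeasure.tendsto_measure_notMem {α ι E : Type*} [MeasurableSpace α]
    [PseudoMetricSpace E] {μ : Measure α} {l : Filter ι} {f : ι → α → E} {c : E}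
    (h : TendstoInMeasure μ f l fun _ => c) {U : Set E} (hU : U ∈ 𝓝 c) :
    Tendsto (fun i => μ {x | f i x ∉ U}) l (𝓝 0) := by
  obtain ⟨ε, hε, hball⟩ := Metric.mem_nhds_iff.1 hU
  refine tendsto_of_tendsto_of_tendsto_of_le_of_le tendsto_const_nhds
    (tendstoInMeasure_iff_dist.1 h ε hε) (fun _ => zero_le) fun i => measure_mono fun x hx => ?_
  by_contra hlt
  exact hx (hball (Metric.mem_ball.2 (not_le.1 hlt)))

lemma pathShift_iterate_apply {E : Type*} (k : ℕ) (g : ℕ → E) (i : ℕ) :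
    pathShift^[k] g i = g (i + k) := by
  induction k generalizing i with
  | zero => rfl
  | succ k ih => rw [Function.iterate_succ_apply', pathShift, ih, add_assoc, add_comm 1 k]

open Classical in
theorem StationaryErgodic.tendstoInMeasure_frequency {Ω E : Type*} [MeasurableSpace Ω]
    [MeasurableSpace E] {μ : Measure Ω} [IsProbabilityMeasure μ] {V : ℕ → Ω → E}
    (hV : ∀ i, Measurable (V i)) (h : StationaryErgodic μ V) {A : Set E} (hA : MeasurableSet A) :
    TendstoInMeasure μ (fun n ω => (((Finset.range n).filter fun i => V i ω ∈ A).card : ℝ) / n)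
      atTop (fun _ => μ.real {ω | V 0 ω ∈ A}) := by
  set Φ : Ω → ℕ → E := fun ω i => V i ω
  have hΦ : Measurable Φ := measurable_pi_lambda _ hV
  have hA₀ : MeasurableSet {g : ℕ → E | g 0 ∈ A} := measurable_pi_apply 0 hA
  have hf : MemLp ({g : ℕ → E | g 0 ∈ A}.indicator fun _ => (1 : ℝ)) 2 (μ.map Φ) :=
    memLp_indicator_const 2 hA₀ 1 (Or.inr (measure_ne_top _ _))
  have := Measure.isProbabilityMeasure_map (μ := μ) hΦ.aemeasurable
  convert (Ergodic.tendstoInMeasure_birkhoffAverage h hf).comp_of_map hΦ.aemeasurable using 1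
  · ext n ω
    simp [birkhoffAverage, birkhoffSum, pathShift_iterate_apply, Set.indicator_apply, Φ,
      div_eq_inv_mul]
  · ext ω
    simp [integral_indicator_const _ hA₀, map_measureReal_apply hΦ hA₀, Φ]

namespace ProbabilityTheory

lemma cdf_map_eq_toReal {Ω : Type*} [MeasurableSpace Ω] {μ : Measure Ω} [IsProbabilityMeasure μ]
    {X : Ω → ℝ} (hX : Measurable X) (t : ℝ) : cdf (μ.map X) t = (μ {ω | X ω ≤ t}).toReal := by
  have := Measure.isProbabilityMeasure_map (μ := μ) hX.aemeasurable
  rw [cdf_eq_real, map_measureReal_apply hX measurableSet_Iic]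
  rfl

/-- The infimum is attained by right-continuity of `cdf ρ`. -/
lemma le_cdf_iff_sInf_le {ρ : Measure ℝ} [IsProbabilityMeasure ρ] {p : ℝ} (hp₀ : 0 < p)
    (hp₁ : p < 1) (t : ℝ) : p ≤ cdf ρ t ↔ sInf {t | p ≤ cdf ρ t} ≤ t := by
  set S := {t | p ≤ cdf ρ t}
  have hne : S.Nonempty :=
    (((tendsto_cdf_atTop ρ).eventually (lt_mem_nhds hp₁)).exists).imp fun _ h => h.le
  obtain ⟨a, ha⟩ := eventually_atBot.1 ((tendsto_cdf_atBot ρ).eventually (gt_mem_nhds hp₀))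
  have hbdd : BddBelow S := ⟨a, fun u hu => le_of_not_ge fun hua => (ha u hua).not_ge hu⟩
  have hmem : p ≤ cdf ρ (sInf S) := by
    refine ge_of_tendsto (((cdf ρ).right_continuous _).mono_left
      (nhdsWithin_mono _ Ioi_subset_Ici_self)) (eventually_nhdsWithin_of_forall fun u hu => ?_)
    obtain ⟨v, hvS, hvu⟩ := exists_lt_of_csInf_lt hne hu
    exact hvS.trans ((cdf ρ).mono hvu.le)
  exact ⟨fun h => csInf_le hbdd h, fun h => hmem.trans ((cdf ρ).mono h)⟩

end ProbabilityTheory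

theorem tendstoInMeasure_kthSmallest_ceil {Ω : Type*} [MeasurableSpace Ω] {μ : Measure Ω}
    {v : ℕ → ℕ → Ω → ℝ} {w : ℕ → Ω → ℝ} {G : ℝ → ℝ} {p q : ℝ}
    (hfreq : ∀ t, TendstoInMeasure μ (fun n ω => (countLE n (w · ω) t : ℝ) / n) atTop
      fun _ => G t)
    (hlt : ∀ t < q, G t < p) (hgt : ∀ t, q < t → p < G t)
    (hclose : ∀ δ > 0, Tendsto (fun n => μ {ω | ∃ i < n, δ < |v n i ω - w i ω|}) atTop (𝓝 0)) :
    TendstoInMeasure μ (fun n ω => kthSmallest n ⌈p * n⌉₊ (v n · ω)) atTop fun _ => q := by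
  rw [tendstoInMeasure_iff_dist]
  intro ε hε
  -- the levels `a + η` and `b - η` of `kthSmallest_ceil_mem_Ioc` for `a = q - ε`, `b = q + ε / 2`,
  -- `η = ε / 4`
  have hbad := (hclose (ε / 4) (by positivity)).add
    (((hfreq _).tendsto_measure_notMem (Iio_mem_nhds (hlt (q - ε + ε / 4) (by linarith)))).add
      ((hfreq _).tendsto_measure_notMem (Ioi_mem_nhds (hgt (q + ε / 2 - ε / 4) (by linarith)))))
  refine tendsto_of_tendsto_of_tendsto_of_le_of_le' tendsto_const_nhds (hbad.trans_eq (by simp))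
    (.of_forall fun _ => zero_le) ?_
  filter_upwards [eventually_gt_atTop 0] with n hn
  refine (measure_mono fun ω hω => ?_).trans
    ((measure_union_le _ _).trans (add_le_add le_rfl (measure_union_le _ _)))
  by_contra hgood
  simp only [mem_union, mem_ofPred_eq, not_or, not_exists, not_and, not_lt, not_not] at hgood
  obtain ⟨hcloseω, hlowω, hhighω⟩ := hgood
  obtain ⟨hgtω, hleω⟩ := kthSmallest_ceil_mem_Ioc hn hcloseω hlowω hhighω
  rw [mem_ofPred_eq, Real.dist_eq, le_abs] at hω
  rcases hω with hω | hω <;> linarith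

theorem empirical_quantile_consistency_general
    {Ω : Type*} [MeasurableSpace Ω] (μ : Measure Ω) [IsProbabilityMeasure μ]
    (α : ℝ) (hα : α ∈ Set.Ioo (0 : ℝ) 1)
    (e : ℕ → Ω → ℝ)
    (hemeas : ∀ i, Measurable (e i))
    (hstat : StationaryErgodic μ e)
    (F : ℝ → ℝ) (hF : ∀ t, F t = (μ {ω | e 0 ω ≤ t}).toReal)
    (s : ℝ) (hs : s = sInf {t : ℝ | 1 - α ≤ F t})
    (hstrict : (∀ t < s, F t < F s) ∧ (∀ t, s < t → F s < F t))
    (Ehat : ℕ → ℕ → Ω → ℝ)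
    (hclose : ∀ δ > (0 : ℝ),
      Tendsto (fun n => μ {ω | ∃ i < n, δ < |Ehat n i ω - e i ω|}) atTop (nhds 0)) :
    TendstoInMeasure μ
      (fun n ω => kthSmallest n (Nat.ceil ((1 - α) * n)) (fun i => Ehat n i ω))
      atTop (fun _ => s) := by
  have := Measure.isProbabilityMeasure_map (μ := μ) (hemeas 0).aemeasurable
  have hFcdf : F = ProbabilityTheory.cdf (μ.map (e 0)) :=
    funext fun t => (hF t).trans (ProbabilityTheory.cdf_map_eq_toReal (hemeas 0) t).symm
  have hquantile (t : ℝ) : 1 - α ≤ F t ↔ s ≤ t := by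
    rw [hs, hFcdf]
    exact ProbabilityTheory.le_cdf_iff_sInf_le (by linarith [hα.2]) (by linarith [hα.1]) t
  refine tendstoInMeasure_kthSmallest_ceil (G := F) (fun t => ?_)
    (fun t ht => not_le.1 fun h => ht.not_ge ((hquantile t).1 h))
    (fun t ht => ((hquantile s).2 le_rfl).trans_lt (hstrict.2 t ht)) hclose
  simpa [hF, measureReal_def, countLE] using
    hstat.tendstoInMeasure_frequency hemeas measurableSet_Iic

/-- consistency of the empirical `(1−α)` quantile of perturbed
residuals.  `(e_i)` is stationary and ergodic with distribution function `F` having a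
bounded density near the `(1−α)` quantile `s` and strictly increasing at `s`; the
perturbations satisfy `max_{i ≤ n} |ê_{i,n} − e_i| →p 0`.  Then the
`⌈(1−α)n⌉`-th smallest value among `ê_{1,n}, …, ê_{n,n}` converges in probability
to `s`. -/
theorem empirical_quantile_consistency
    {Ω : Type*} [MeasurableSpace Ω] (μ : Measure Ω) [IsProbabilityMeasure μ]
    (α : ℝ) (hα : α ∈ Set.Ioo (0 : ℝ) 1)
    (e : ℕ → Ω → ℝ)
    (hemeas : ∀ i, Measurable (e i))
    (hstat : StationaryErgodic μ e)
    (F : ℝ → ℝ) (hF : ∀ t, F t = (μ {ω | e 0 ω ≤ t}).toReal)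
    (s : ℝ) (hs : s = sInf {t : ℝ | 1 - α ≤ F t})
    (hdens : ∃ pdf : ℝ → ℝ,
      Measure.map (e 0) μ = MeasureTheory.volume.withDensity
        (fun t => ENNReal.ofReal (pdf t)) ∧
      ∃ δ > (0 : ℝ), ∃ Cf : ℝ, ∀ t ∈ Set.Ioo (s - δ) (s + δ), pdf t ≤ Cf)
    (hstrict : (∀ t < s, F t < F s) ∧ (∀ t, s < t → F s < F t))
    (Ehat : ℕ → ℕ → Ω → ℝ)
    (hEmeas : ∀ n i, Measurable (Ehat n i))
    (hclose : ∀ δ > (0 : ℝ),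
      Tendsto (fun n => μ {ω | ∃ i < n, δ < |Ehat n i ω - e i ω|}) atTop (nhds 0)) :
    TendstoInMeasure μ
      (fun n ω => kthSmallest n (Nat.ceil ((1 - α) * n)) (fun i => Ehat n i ω))
      atTop (fun _ => s) :=
  empirical_quantile_consistency_general μ α hα e hemeas hstat F hF s hs hstrict Ehat hclose
end

section
/- Fix α ∈ (0,1), an integer n ≥ 1, real numbers r_1, …, r_n, and r ∈ ℝ. Let k = ⌈(1−α)(n+1)⌉ and let r_{(k)} denote the k-th smallest element of the multiset {r_1, …, r_n, r} (of size n+1). Then (1 + #{i ∈ {1,…,n} : r_i ≥ r})/(n+1) > α if and only if r ≤ r_{(k)}. -/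
open Set

/-- The `k`-th smallest element of the multiset `{v 0, …, v n}` (of size `n+1`),
described as the smallest `t` that is at least `k` of the values. -/
noncomputable def kthSmallestFin {N : ℕ} (k : ℕ) (v : Fin N → ℝ) : ℝ :=
  sInf {t : ℝ | k ≤ Nat.card {i : Fin N // v i ≤ t}}

/-- deterministic equivalence between the conformal p-value rule and
the empirical quantile rule with conservative tie handling.  For reals
`r_1, …, r_n, r` and `k = ⌈(1−α)(n+1)⌉`, one has
`(1 + #{i : r_i ≥ r})/(n+1) > α` if and only if `r ≤ r_{(k)}`, the `k`-th smallest
element of the multiset `{r_1, …, r_n, r}`. -/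
theorem conformal_pvalue_quantile_equiv
    (α : ℝ) (hα : α ∈ Set.Ioo (0 : ℝ) 1)
    (n : ℕ) (hn : 1 ≤ n)
    (r : Fin n → ℝ) (rnew : ℝ)
    (k : ℕ) (hk : k = Nat.ceil ((1 - α) * (n + 1))) :
    (1 + (Nat.card {i : Fin n // rnew ≤ r i} : ℝ)) / (n + 1) > α ↔
      rnew ≤ kthSmallestFin k (Fin.snoc r rnew) := by
  obtain ⟨hα0, hα1⟩ := hα
  have hn1 : (0:ℝ) < (n:ℝ) + 1 := by positivity
  set v : Fin (n+1) → ℝ := Fin.snoc r rnew with hv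
  have hm : (Nat.card {i : Fin n // rnew ≤ r i})
      = (Finset.univ.filter (fun i : Fin n => rnew ≤ r i)).card := by
    rw [Nat.card_eq_fintype_card, Fintype.card_subtype]
  set m := (Finset.univ.filter (fun i : Fin n => rnew ≤ r i)).card with hmdef
  set c := (Finset.univ.filter (fun i : Fin n => r i < rnew)).card with hcdef
  have hcm : c + m = n := by
    have := Finset.card_filter_add_card_filter_not
      (s := (Finset.univ : Finset (Fin n))) (p := fun i => r i < rnew)
    simpa [not_lt, hcdef, hmdef] using this
  have hAcount : ∀ t : ℝ, Nat.card {i : Fin (n+1) // v i ≤ t} =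
      (Finset.univ.filter (fun i : Fin n => r i ≤ t)).card + (if rnew ≤ t then 1 else 0) := by
    intro t
    rw [Nat.card_eq_fintype_card, Fintype.card_subtype,
      Finset.card_filter, Finset.card_filter, Fin.sum_univ_castSucc]
    simp [hv]
  have hk1 : 1 ≤ k := by
    rw [hk]
    exact Nat.one_le_ceil_iff.mpr (by nlinarith)
  have hkle : k ≤ n + 1 := by
    rw [hk]
    refine Nat.ceil_le.mpr ?_
    push_cast
    nlinarith
  -- the set in the definition
  set S : Set ℝ := {t : ℝ | k ≤ Nat.card {i : Fin (n+1) // v i ≤ t}} with hS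
  have hSne : S.Nonempty := by
    refine ⟨Finset.univ.sup' (Finset.univ_nonempty) v, ?_⟩
    have hle : ∀ i : Fin (n+1), v i ≤ Finset.univ.sup' Finset.univ_nonempty v :=
      fun i => Finset.le_sup' v (Finset.mem_univ i)
    have : Nat.card {i : Fin (n+1) // v i ≤ Finset.univ.sup' Finset.univ_nonempty v} = n + 1 := by
      rw [hAcount]
      have h1 : (Finset.univ.filter (fun i : Fin n => r i ≤ Finset.univ.sup' Finset.univ_nonempty v)) = Finset.univ := by
        refine Finset.filter_true_of_mem fun i _ => ?_
        simpa [hv] using hle (Fin.castSucc i)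
      have h2 : rnew ≤ Finset.univ.sup' Finset.univ_nonempty v := by
        simpa [hv] using hle (Fin.last n)
      rw [h1, if_pos h2, Finset.card_univ, Fintype.card_fin]
    simp only [hS, Set.mem_setOf_eq, this]
    exact hkle
  have hSbdd : BddBelow S := by
    refine ⟨Finset.univ.inf' Finset.univ_nonempty v, fun t ht => ?_⟩
    have hcard : 0 < Nat.card {i : Fin (n+1) // v i ≤ t} := lt_of_lt_of_le hk1 ht
    have hne : Nonempty {i : Fin (n+1) // v i ≤ t} := Nat.card_pos_iff.mp hcard |>.1
    obtain ⟨i, hi⟩ := hne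
    exact le_trans (Finset.inf'_le v (Finset.mem_univ i)) hi
  have hkey : c < k ↔ rnew ≤ kthSmallestFin k v := by
    constructor
    · intro hck
      refine le_csInf hSne fun t ht => ?_
      by_contra hlt
      push_neg at hlt
      have : Nat.card {i : Fin (n+1) // v i ≤ t}
          ≤ c := by
        rw [hAcount, if_neg (not_le.mpr hlt), add_zero]
        exact Finset.card_le_card (Finset.monotone_filter_right _
          (fun i _ hi => lt_of_le_of_lt hi hlt))
      exact absurd (le_trans ht this) (not_le.mpr hck)
    · intro hle
      by_contra hck
      push_neg at hck
      -- k ≤ c; take t = max of {r i : r i < rnew}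
      have hcpos : 0 < c := lt_of_lt_of_le hk1 hck
      have hAne : (Finset.univ.filter (fun i : Fin n => r i < rnew)).Nonempty :=
        Finset.card_pos.mp hcpos
      set t := (Finset.univ.filter (fun i : Fin n => r i < rnew)).sup'
        hAne r with htdef
      obtain ⟨i0, hi0, hti0⟩ := Finset.exists_mem_eq_sup' hAne r
      have htlt : t < rnew := by
        rw [htdef, hti0]
        exact (Finset.mem_filter.mp hi0).2
      have htS : t ∈ S := by
        have hsub : (Finset.univ.filter (fun i : Fin n => r i < rnew))
            ⊆ (Finset.univ.filter (fun i : Fin n => r i ≤ t)) := by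
          intro i hi
          refine Finset.mem_filter.mpr ⟨Finset.mem_univ i, ?_⟩
          exact Finset.le_sup' r hi
        have : c ≤ (Finset.univ.filter (fun i : Fin n => r i ≤ t)).card :=
          Finset.card_le_card hsub
        simp only [hS, Set.mem_setOf_eq, hAcount, if_neg (not_le.mpr htlt), add_zero]
        exact le_trans hck this
      have : rnew ≤ t := le_trans hle (csInf_le hSbdd htS)
      exact absurd htlt (not_lt.mpr this)
  rw [hm, ← hkey, hk]
  rw [Nat.lt_ceil]
  have hcreal : (c : ℝ) + m = n := by exact_mod_cast congrArg (Nat.cast : ℕ → ℝ) hcm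
  rw [gt_iff_lt, lt_div_iff₀ hn1]
  constructor
  · intro h; nlinarith
  · intro h; nlinarith
end
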